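/- arXiv:1803.07914 — 7 statements merged into one kernel-verified Lean document; each statement's English description precedes it below -/
import Mathlib

section
/- Let β be a real number with |β| > 1/2, let ℓ > 0, and let y : [0, ℓ] → ℂ be a twice continuously differentiable function satisfying iβ y(x) − iβ y''(x) + y'(x) = 0 for all x ∈ (0, ℓ), with y(0) = 0 and y(ℓ) = 0. Then y ≡ 0 on [0, ℓ]. -/
open Set Complex

private lemma hasDerivAt_cexp_mul (r : ℂ) (x : ℝ) :
    HasDerivAt (fun t : ℝ => Complex.exp (r * t)) (r * Complex.exp (r * x)) x := by
  have h1 : HasDerivAt (fun z : ℂ => Complex.exp (r * z)) (r * Complex.exp (r * x)) (x : ℂ) := by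
    have := (Complex.hasDerivAt_exp (r * x)).comp (x : ℂ) ((hasDerivAt_id (x : ℂ)).const_mul r)
    simpa [mul_comm, Function.comp_def] using this
  exact h1.comp_ofReal

theorem stmt_1 (β ℓ : ℝ) (hβ : 1/2 < |β|) (hℓ : 0 < ℓ) (y : ℝ → ℂ)
    (hy : ContDiff ℝ 2 y)
    (hode : ∀ x ∈ Set.Ioo (0:ℝ) ℓ,
      Complex.I * (β : ℂ) * y x - Complex.I * (β : ℂ) * deriv (deriv y) x + deriv y x = 0)
    (h0 : y 0 = 0) (hend : y ℓ = 0) :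
    ∀ x ∈ Set.Icc (0:ℝ) ℓ, y x = 0 := by
  have hβ0 : β ≠ 0 := by intro h; rw [h] at hβ; norm_num at hβ
  have hb0 : (β : ℂ) ≠ 0 := by exact_mod_cast hβ0
  have hIb : Complex.I * (β : ℂ) ≠ 0 := mul_ne_zero Complex.I_ne_zero hb0
  -- the real discriminant
  have hβsq : 1/β^2 < 4 := by
    have h1 : (1/4 : ℝ) < β^2 := by nlinarith [_root_.sq_abs β, abs_nonneg β]
    rw [div_lt_iff₀ (by positivity)]
    nlinarith
  set s : ℝ := Real.sqrt (4 - 1/β^2) with hs_def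
  have hs2 : s^2 = 4 - 1/β^2 := Real.sq_sqrt (by linarith)
  have hspos : 0 < s := Real.sqrt_pos.mpr (by linarith)
  have hsC : (s : ℂ)^2 = 4 - 1/(β : ℂ)^2 := by
    have := congrArg (Complex.ofReal) hs2
    push_cast at this
    exact_mod_cast hs2
  set r₁ : ℂ := ((s : ℂ) - Complex.I/β)/2 with hr₁
  set r₂ : ℂ := (-(s : ℂ) - Complex.I/β)/2 with hr₂
  have hdiff : r₁ - r₂ = (s : ℂ) := by rw [hr₁, hr₂]; ring
  -- root equations
  have hInv : (β : ℂ) * (β : ℂ)⁻¹ = 1 := mul_inv_cancel₀ hb0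
  have hroot₁ : Complex.I * (β : ℂ) + r₁ - Complex.I * β * r₁^2 = 0 := by
    rw [hr₁]
    linear_combination ((β:ℂ)*(s:ℂ)*(β:ℂ)⁻¹/2 - Complex.I*(β:ℂ)*((β:ℂ)⁻¹)^2/4) * Complex.I_sq
      + (-(s:ℂ)/2 + Complex.I*(β:ℂ)⁻¹/2) * hInv + (-(Complex.I*(β:ℂ))/4) * hsC
  have hroot₂ : Complex.I * (β : ℂ) + r₂ - Complex.I * β * r₂^2 = 0 := by
    rw [hr₂]
    linear_combination (-(β:ℂ)*(s:ℂ)*(β:ℂ)⁻¹/2 - Complex.I*(β:ℂ)*((β:ℂ)⁻¹)^2/4) * Complex.I_sq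
      + ((s:ℂ)/2 + Complex.I*(β:ℂ)⁻¹/2) * hInv + (-(Complex.I*(β:ℂ))/4) * hsC
  set a : ℂ := (Complex.I * (β : ℂ))⁻¹ with ha
  have h4 : Complex.I * (β : ℂ) * a = 1 := by rw [ha]; exact mul_inv_cancel₀ hIb
  have hsq₁ : r₁^2 = 1 + a * r₁ := by
    apply mul_left_cancel₀ hIb
    linear_combination -hroot₁ - r₁ * h4
  have hsq₂ : r₂^2 = 1 + a * r₂ := by
    apply mul_left_cancel₀ hIb
    linear_combination -hroot₂ - r₂ * h4
  -- regularity of y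
  have hy' : Differentiable ℝ y ∧ ContDiff ℝ 1 (deriv y) := by
    have h2 : ContDiff ℝ ((1 : ℕ) + 1) y := by exact_mod_cast hy
    rw [contDiff_succ_iff_deriv] at h2
    exact ⟨h2.1, h2.2.2⟩
  have hdy : Differentiable ℝ (deriv y) := hy'.2.differentiable one_ne_zero
  have hddy : Continuous (deriv (deriv y)) := hy'.2.continuous_deriv le_rfl
  -- extend the ODE to the closed interval, in resolved form y'' = y + a y'
  have hodeIcc : ∀ x ∈ Set.Icc (0:ℝ) ℓ, deriv (deriv y) x = y x + a * deriv y x := by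
    have hEq : Set.EqOn (fun x => deriv (deriv y) x - y x - a * deriv y x) (fun _ => 0)
        (Set.Ioo (0:ℝ) ℓ) := by
      intro x hx
      have h := hode x hx
      have h5 : Complex.I * β * (deriv (deriv y) x - y x - a * deriv y x) = 0 := by
        linear_combination -h - deriv y x * h4
      exact (mul_eq_zero.mp h5).resolve_left hIb
    have hcont : Continuous (fun x => deriv (deriv y) x - y x - a * deriv y x) :=
      (hddy.sub (hy'.1.continuous)).sub (continuous_const.mul hdy.continuous)
    have hcl := hEq.closure hcont continuous_const
    rw [closure_Ioo hℓ.ne] at hcl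
    intro x hx
    have h2 := hcl hx
    simp only at h2
    linear_combination h2
  -- set up the first-order system
  set c : ℂ := deriv y 0 / (s : ℂ) with hc
  set g : ℝ → ℂ := fun x => Complex.exp (r₁ * x) - Complex.exp (r₂ * x) with hg
  set g' : ℝ → ℂ := fun x => r₁ * Complex.exp (r₁ * x) - r₂ * Complex.exp (r₂ * x) with hg'
  have hgd : ∀ x : ℝ, HasDerivAt g (g' x) x := fun x =>
    (hasDerivAt_cexp_mul r₁ x).sub (hasDerivAt_cexp_mul r₂ x)
  have hgd' : ∀ x : ℝ, HasDerivAt g' (g x + a * g' x) x := by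
    intro x
    have h := ((hasDerivAt_cexp_mul r₁ x).const_mul r₁).sub
      ((hasDerivAt_cexp_mul r₂ x).const_mul r₂)
    refine h.congr_deriv ?_
    symm
    rw [hg, hg']
    simp only
    linear_combination Complex.exp (r₂*x) * hsq₂ - Complex.exp (r₁*x) * hsq₁
  -- the linear vector field
  set L : (ℂ × ℂ) →L[ℂ] (ℂ × ℂ) :=
    (ContinuousLinearMap.snd ℂ ℂ ℂ).prod
      (ContinuousLinearMap.fst ℂ ℂ ℂ + a • ContinuousLinearMap.snd ℂ ℂ ℂ) with hL
  have hLval : ∀ p : ℂ × ℂ, L p = (p.2, p.1 + a * p.2) := by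
    intro p
    simp [hL, ContinuousLinearMap.prod_apply]
  set F : ℝ → ℂ × ℂ := fun t => (y t, deriv y t) with hF
  set G : ℝ → ℂ × ℂ := fun t => (c * g t, c * g' t) with hG
  have hFd : ∀ t ∈ Set.Ico (0:ℝ) ℓ, HasDerivWithinAt F (L (F t)) (Set.Ici t) t := by
    intro t ht
    have h1 : HasDerivAt F (deriv y t, deriv (deriv y) t) t :=
      ((hy'.1 t).hasDerivAt).prodMk ((hdy t).hasDerivAt)
    rw [hLval]
    have h2 : deriv (deriv y) t = y t + a * deriv y t :=
      hodeIcc t ⟨ht.1, ht.2.le⟩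
    rw [hF]
    simp only
    rw [← h2]
    exact h1.hasDerivWithinAt
  have hGd : ∀ t ∈ Set.Ico (0:ℝ) ℓ, HasDerivWithinAt G (L (G t)) (Set.Ici t) t := by
    intro t _
    have h1 : HasDerivAt G (c * g' t, c * (g t + a * g' t)) t :=
      (((hgd t).const_mul c).prodMk ((hgd' t).const_mul c))
    have h5 : (c * g' t, c * (g t + a * g' t)) = ((G t).2, (G t).1 + a * (G t).2) := by
      rw [hG]; simp only [Prod.mk.injEq]; exact ⟨trivial, by ring⟩
    have h6 : L (G t) = (c * g' t, c * (g t + a * g' t)) := (hLval (G t)).trans h5.symm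
    rw [h6]
    exact h1.hasDerivWithinAt
  have hF0 : F 0 = G 0 := by
    have hg0 : g 0 = 0 := by simp [hg]
    have hg'0 : g' 0 = (s : ℂ) := by
      rw [hg']
      simp only [Complex.ofReal_zero, mul_zero, Complex.exp_zero, mul_one]
      exact hdiff
    have hsne : (s : ℂ) ≠ 0 := Complex.ofReal_ne_zero.mpr hspos.ne'
    have hcs : c * (s : ℂ) = deriv y 0 := by
      rw [hc, div_mul_cancel₀ _ hsne]
    rw [hF, hG]
    simp only [h0, hg0, hg'0, mul_zero, hcs]
  have heq : Set.EqOn F G (Set.Icc 0 ℓ) := by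
    apply ODE_solution_unique (v := fun _ p => L p) (K := ‖L‖₊)
      (fun _ => L.lipschitz) _ hFd _ hGd hF0
    · exact ((hy'.1.continuous).prodMk hdy.continuous).continuousOn
    · exact ((continuous_const.mul ((Complex.continuous_exp.comp
        (continuous_const.mul Complex.continuous_ofReal)).sub
        (Complex.continuous_exp.comp (continuous_const.mul Complex.continuous_ofReal)))).prodMk
        (continuous_const.mul (((continuous_const.mul (Complex.continuous_exp.comp
        (continuous_const.mul Complex.continuous_ofReal)))).sub
        (continuous_const.mul (Complex.continuous_exp.comp
        (continuous_const.mul Complex.continuous_ofReal)))))).continuousOn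
  -- evaluate at ℓ to get c = 0
  have hgl : g ℓ ≠ 0 := by
    rw [hg]
    simp only [sub_ne_zero]
    intro hexp
    have h1 : Complex.exp (r₁ * ℓ - r₂ * ℓ) = 1 := by
      rw [Complex.exp_sub, hexp, div_self (Complex.exp_ne_zero _)]
    have h2 : r₁ * ℓ - r₂ * ℓ = ((s * ℓ : ℝ) : ℂ) := by
      push_cast
      linear_combination (ℓ : ℂ) * hdiff
    rw [h2, ← Complex.ofReal_exp] at h1
    have h3 : Real.exp (s * ℓ) = 1 := by exact_mod_cast h1
    have h4 : s * ℓ = 0 := by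
      have := Real.exp_eq_one_iff (s * ℓ) |>.mp h3
      exact this
    nlinarith
  have hc0 : c = 0 := by
    have hl := heq (Set.right_mem_Icc.mpr hℓ.le)
    have : y ℓ = c * g ℓ := congrArg Prod.fst hl
    rw [hend] at this
    exact (mul_eq_zero.mp this.symm).resolve_right hgl
  intro x hx
  have := heq hx
  have h1 : y x = c * g x := congrArg Prod.fst this
  rw [h1, hc0, zero_mul]
end

section
/- Let β be a real number with |β| = 1/2, let ℓ > 0, and let y : [0, ℓ] → ℂ be a twice continuously differentiable function satisfying iβ y(x) − iβ y''(x) + y'(x) = 0 for all x ∈ (0, ℓ), with y(0) = 0 and y(ℓ) = 0. Then y ≡ 0 on [0, ℓ]. -/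
open Set

theorem stmt_2 (β ℓ : ℝ) (hβ : |β| = 1/2) (hℓ : 0 < ℓ) (y : ℝ → ℂ)
    (hy : ContDiff ℝ 2 y)
    (hode : ∀ x ∈ Set.Ioo (0:ℝ) ℓ,
      Complex.I * (β : ℂ) * y x - Complex.I * (β : ℂ) * deriv (deriv y) x + deriv y x = 0)
    (h0 : y 0 = 0) (hend : y ℓ = 0) :
    ∀ x ∈ Set.Icc (0:ℝ) ℓ, y x = 0 := by
  have hb : (β:ℂ)^2 = 1/4 := by
    have h : β^2 = 1/4 := by rw [← sq_abs, hβ]; norm_num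
    rw [← Complex.ofReal_pow, h]; norm_num
  -- basic regularity facts
  have hyd : Differentiable ℝ y := hy.differentiable (by norm_num)
  have hy1 : ContDiff ℝ 1 (deriv y) := by
    have h2 : ContDiff ℝ (1+1) y := by
      exact hy.of_le (by norm_num)
    exact (contDiff_succ_iff_deriv.mp h2).2.2
  have hy1d : Differentiable ℝ (deriv y) := hy1.differentiable (by norm_num)
  have hy2c : Continuous (deriv (deriv y)) := hy1.continuous_deriv le_rfl
  -- extend the ODE to the closed interval by continuity
  have hodeIcc : ∀ x ∈ Icc (0:ℝ) ℓ,
      Complex.I * (β : ℂ) * y x - Complex.I * (β : ℂ) * deriv (deriv y) x + deriv y x = 0 := by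
    have hcl : closure (Ioo (0:ℝ) ℓ) = Icc 0 ℓ := closure_Ioo hℓ.ne
    have hcont : Continuous (fun x =>
        Complex.I * (β : ℂ) * y x - Complex.I * (β : ℂ) * deriv (deriv y) x + deriv y x) := by
      have := hy.continuous
      have := hy1.continuous
      fun_prop
    intro x hx
    rw [← hcl] at hx
    exact (Set.EqOn.closure (fun t ht => hode t ht) hcont continuous_const) hx
  set c : ℂ := 2 * Complex.I * (β:ℂ) with hc
  have hde : ∀ x : ℝ, HasDerivAt (fun t : ℝ => Complex.exp (c * t)) (c * Complex.exp (c * x)) x := by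
    intro x
    have h1 : HasDerivAt (fun t : ℝ => c * (t:ℂ)) c x := by
      simpa using (Complex.ofRealCLM.hasDerivAt (x := x)).const_mul c
    simpa [mul_comm] using h1.cexp
  set u : ℝ → ℂ := fun x => y x * Complex.exp (c * x) with hu
  set u1 : ℝ → ℂ := fun x => (deriv y x + c * y x) * Complex.exp (c * x) with hu1
  have hU : ∀ x : ℝ, HasDerivAt u (u1 x) x := by
    intro x
    have : HasDerivAt (fun t : ℝ => y t * Complex.exp (c * t)) _ x := ((hyd x).hasDerivAt).mul (hde x)
    convert this using 1
    show (deriv y x + c * y x) * Complex.exp (c * x) = _; ring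
  have hU1 : ∀ x ∈ Icc (0:ℝ) ℓ, HasDerivAt u1 0 x := by
    intro x hx
    have hd : HasDerivAt u1
        ((deriv (deriv y) x + c * deriv y x) * Complex.exp (c * x)
          + (deriv y x + c * y x) * (c * Complex.exp (c * x))) x :=
      (((hy1d x).hasDerivAt).add (((hyd x).hasDerivAt).const_mul c)).mul (hde x)
    convert hd using 1
    have h := hodeIcc x hx
    rw [hc]
    linear_combination (-4*Complex.I*(β:ℂ)*Complex.exp (c*x))*h
      + 4*(deriv (deriv y) x)*Complex.exp (c*x)*hb + (-4*(β:ℂ)^2*Complex.exp (c*x)*deriv (deriv y) x)*Complex.I_sq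
  -- u1 is constant on [0, ℓ]
  have hu1cont : ContinuousOn u1 (Icc 0 ℓ) := by
    have h1 := hy1.continuous
    have h2 := hy.continuous
    have : Continuous u1 := by fun_prop
    exact this.continuousOn
  have hu1const : ∀ x ∈ Icc (0:ℝ) ℓ, u1 x = u1 0 :=
    constant_of_has_deriv_right_zero hu1cont
      (fun x hx => (hU1 x (Ico_subset_Icc_self hx)).hasDerivWithinAt)
  -- w := u - (u1 0) * x is constant on [0, ℓ]
  set w : ℝ → ℂ := fun x => u x - (u1 0) * x with hw
  have hWd : ∀ x ∈ Ico (0:ℝ) ℓ, HasDerivWithinAt w 0 (Ici x) x := by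
    intro x hx
    have h1 : HasDerivAt (fun t : ℝ => (u1 0) * (t:ℂ)) (u1 0) x := by
      simpa using (Complex.ofRealCLM.hasDerivAt (x := x)).const_mul (u1 0)
    have h2 : HasDerivAt w (u1 x - u1 0) x := (hU x).sub h1
    rw [hu1const x (Ico_subset_Icc_self hx), sub_self] at h2
    exact h2.hasDerivWithinAt
  have hwcont : ContinuousOn w (Icc 0 ℓ) := by
    have h2 := hy.continuous
    have : Continuous w := by fun_prop
    exact this.continuousOn
  have hwconst : ∀ x ∈ Icc (0:ℝ) ℓ, w x = w 0 :=
    constant_of_has_deriv_right_zero hwcont hWd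
  have hw0 : w 0 = 0 := by simp [hw, hu, h0]
  have huval : ∀ x ∈ Icc (0:ℝ) ℓ, u x = u1 0 * x := by
    intro x hx
    have := hwconst x hx
    rw [hw0] at this
    simpa [hw, sub_eq_zero] using this
  have hc0 : u1 0 = 0 := by
    have hl := huval ℓ ⟨hℓ.le, le_rfl⟩
    have : u ℓ = 0 := by simp [hu, hend]
    rw [this] at hl
    have := hl.symm
    rcases mul_eq_zero.mp this with h | h
    · exact h
    · exact absurd (show ℓ = 0 by exact_mod_cast h) hℓ.ne'
  intro x hx
  have := huval x hx
  rw [hc0, zero_mul] at this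
  have hexp : Complex.exp (c * x) ≠ 0 := Complex.exp_ne_zero _
  exact (mul_eq_zero.mp this).resolve_right hexp
end

section
/- Let ℓ_1, ℓ_2 > 0 with ℓ_1/ℓ_2 = p/q for positive integers p, q. Set β = ℓ_1/(2√(p²π² + ℓ_1²)). Then also β = ℓ_2/(2√(q²π² + ℓ_2²)), 0 < β < 1/2, and the functions y_1(x) = e^{−(i/(2β)) x} sin(pπ x/ℓ_1) on [0, ℓ_1] and y_2(x) = −e^{−(i/(2β)) x} sin(qπ x/ℓ_2) on [0, ℓ_2] each satisfy the ODE iβ y − iβ y'' + y' = 0 with y_j(0) = y_j(ℓ_j) = 0 (j = 1, 2), and y_1'(0) + y_2'(0) = 0, while y_1 is not identically zero. -/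
lemma aux_g (c k : ℂ) (x : ℂ) :
    HasDerivAt (fun z => Complex.exp (c*z) * Complex.sin (k*z))
      (Complex.exp (c*x) * (c * Complex.sin (k*x) + k * Complex.cos (k*x))) x := by
  have h1 : HasDerivAt (fun z : ℂ => Complex.exp (c*z)) (Complex.exp (c*x) * c) x := by
    simpa [Function.comp_def] using (Complex.hasDerivAt_exp (c*x)).comp x ((hasDerivAt_id x).const_mul c)
  have h2 : HasDerivAt (fun z : ℂ => Complex.sin (k*z)) (Complex.cos (k*x) * k) x := by
    simpa [Function.comp_def] using (Complex.hasDerivAt_sin (k*x)).comp x ((hasDerivAt_id x).const_mul k)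
  have := h1.mul h2
  refine this.congr_deriv ?_
  ring

lemma aux_g' (c k : ℂ) (x : ℂ) :
    HasDerivAt (fun z => Complex.exp (c*z) * (c * Complex.sin (k*z) + k * Complex.cos (k*z)))
      (Complex.exp (c*x) * ((c^2 - k^2) * Complex.sin (k*x) + 2*c*k * Complex.cos (k*x))) x := by
  have h1 : HasDerivAt (fun z : ℂ => Complex.exp (c*z)) (Complex.exp (c*x) * c) x := by
    simpa [Function.comp_def] using (Complex.hasDerivAt_exp (c*x)).comp x ((hasDerivAt_id x).const_mul c)
  have h2 : HasDerivAt (fun z : ℂ => Complex.sin (k*z)) (Complex.cos (k*x) * k) x := by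
    simpa [Function.comp_def] using (Complex.hasDerivAt_sin (k*x)).comp x ((hasDerivAt_id x).const_mul k)
  have h3 : HasDerivAt (fun z : ℂ => Complex.cos (k*z)) (-Complex.sin (k*x) * k) x := by
    simpa [Function.comp_def] using (Complex.hasDerivAt_cos (k*x)).comp x ((hasDerivAt_id x).const_mul k)
  have := h1.mul ((h2.const_mul c).add (h3.const_mul k))
  refine this.congr_deriv ?_
  simp only [Pi.add_apply]
  ring

lemma aux_coeff (β : ℝ) (hβ0 : β ≠ 0) (k : ℝ) (hk : 4*β^2*(1+k^2) = 1) (S C E : ℂ) :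
    Complex.I*β*(E*S)
      - Complex.I*β*(E*(((-(Complex.I/(2*β)))^2 - (k:ℂ)^2)*S + 2*(-(Complex.I/(2*β)))*k*C))
      + E*((-(Complex.I/(2*β)))*S + k*C) = 0 := by
  have hβ0' : (β:ℂ) ≠ 0 := Complex.ofReal_ne_zero.mpr hβ0
  have hk' : (4:ℂ)*(β:ℂ)^2*(1+(k:ℂ)^2) = 1 := by exact_mod_cast congrArg (Complex.ofReal) hk
  have hI : Complex.I^2 = -1 := Complex.I_sq
  set c : ℂ := -(Complex.I/(2*(β:ℂ))) with hc
  have hc2 : c^2 = -(1+(k:ℂ)^2) := by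
    rw [hc]
    field_simp
    linear_combination hk' + hI
  have hmain : Complex.I*(β:ℂ)*(1 - (c^2-(k:ℂ)^2)) + c = 0 := by
    rw [hc2, hc]
    field_simp
    linear_combination Complex.I * hk'
  have hcos : -(Complex.I*(β:ℂ))*(2*c*(k:ℂ)) + (k:ℂ) = 0 := by
    rw [hc]
    field_simp
    linear_combination (k:ℂ)*hI
  linear_combination (E*S)*hmain + (E*C)*hcos

theorem stmt_6 (ℓ₁ ℓ₂ : ℝ) (h1 : 0 < ℓ₁) (h2 : 0 < ℓ₂) (p q : ℕ) (hp : 0 < p) (hq : 0 < q)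
    (hpq : ℓ₁ / ℓ₂ = (p:ℝ) / (q:ℝ)) (β : ℝ)
    (hβ : β = ℓ₁ / (2 * Real.sqrt ((p:ℝ)^2 * Real.pi^2 + ℓ₁^2)))
    (y₁ y₂ : ℝ → ℂ)
    (hy₁ : ∀ x : ℝ, y₁ x = Complex.exp (-(Complex.I / (2 * (β:ℂ))) * (x:ℂ)) *
      ((Real.sin ((p:ℝ) * Real.pi * x / ℓ₁) : ℝ) : ℂ))
    (hy₂ : ∀ x : ℝ, y₂ x = -(Complex.exp (-(Complex.I / (2 * (β:ℂ))) * (x:ℂ)) *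
      ((Real.sin ((q:ℝ) * Real.pi * x / ℓ₂) : ℝ) : ℂ))) :
    β = ℓ₂ / (2 * Real.sqrt ((q:ℝ)^2 * Real.pi^2 + ℓ₂^2)) ∧ 0 < β ∧ β < 1/2 ∧
    (∀ x ∈ Set.Ioo (0:ℝ) ℓ₁,
      Complex.I * (β:ℂ) * y₁ x - Complex.I * (β:ℂ) * deriv (deriv y₁) x + deriv y₁ x = 0) ∧
    (∀ x ∈ Set.Ioo (0:ℝ) ℓ₂,
      Complex.I * (β:ℂ) * y₂ x - Complex.I * (β:ℂ) * deriv (deriv y₂) x + deriv y₂ x = 0) ∧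
    y₁ 0 = 0 ∧ y₁ ℓ₁ = 0 ∧ y₂ 0 = 0 ∧ y₂ ℓ₂ = 0 ∧
    deriv y₁ 0 + deriv y₂ 0 = 0 ∧
    (∃ x ∈ Set.Icc (0:ℝ) ℓ₁, y₁ x ≠ 0) := by
  have hπ := Real.pi_pos
  have hp1 : (1:ℝ) ≤ (p:ℝ) := by exact_mod_cast hp
  have hq1 : (1:ℝ) ≤ (q:ℝ) := by exact_mod_cast hq
  have hS1 : (0:ℝ) < (p:ℝ)^2 * Real.pi^2 + ℓ₁^2 := by positivity
  have hS2 : (0:ℝ) < (q:ℝ)^2 * Real.pi^2 + ℓ₂^2 := by positivity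
  have hs1 : 0 < Real.sqrt ((p:ℝ)^2 * Real.pi^2 + ℓ₁^2) := Real.sqrt_pos.mpr hS1
  have hs2 : 0 < Real.sqrt ((q:ℝ)^2 * Real.pi^2 + ℓ₂^2) := Real.sqrt_pos.mpr hS2
  have hsq1 : (Real.sqrt ((p:ℝ)^2 * Real.pi^2 + ℓ₁^2))^2 = (p:ℝ)^2 * Real.pi^2 + ℓ₁^2 :=
    Real.sq_sqrt hS1.le
  have hsq2 : (Real.sqrt ((q:ℝ)^2 * Real.pi^2 + ℓ₂^2))^2 = (q:ℝ)^2 * Real.pi^2 + ℓ₂^2 :=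
    Real.sq_sqrt hS2.le
  have hβpos : 0 < β := by rw [hβ]; positivity
  have hβ0 : β ≠ 0 := ne_of_gt hβpos
  have hℓq : ℓ₁ * (q:ℝ) = ℓ₂ * (p:ℝ) := by
    field_simp at hpq
    linarith [hpq]
  -- β equality for ℓ₂
  have hsqid : ℓ₁ * Real.sqrt ((q:ℝ)^2 * Real.pi^2 + ℓ₂^2)
      = ℓ₂ * Real.sqrt ((p:ℝ)^2 * Real.pi^2 + ℓ₁^2) := by
    have key : (ℓ₁ * Real.sqrt ((q:ℝ)^2 * Real.pi^2 + ℓ₂^2))^2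
        = (ℓ₂ * Real.sqrt ((p:ℝ)^2 * Real.pi^2 + ℓ₁^2))^2 := by
      rw [mul_pow, mul_pow, hsq1, hsq2]
      linear_combination (Real.pi^2*(ℓ₁*(q:ℝ)+ℓ₂*(p:ℝ)))*hℓq
    have hA : 0 ≤ ℓ₁ * Real.sqrt ((q:ℝ)^2 * Real.pi^2 + ℓ₂^2) := by positivity
    have hB : 0 ≤ ℓ₂ * Real.sqrt ((p:ℝ)^2 * Real.pi^2 + ℓ₁^2) := by positivity
    calc ℓ₁ * Real.sqrt ((q:ℝ)^2 * Real.pi^2 + ℓ₂^2)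
        = Real.sqrt ((ℓ₁ * Real.sqrt ((q:ℝ)^2 * Real.pi^2 + ℓ₂^2))^2) := (Real.sqrt_sq hA).symm
      _ = Real.sqrt ((ℓ₂ * Real.sqrt ((p:ℝ)^2 * Real.pi^2 + ℓ₁^2))^2) := by rw [key]
      _ = ℓ₂ * Real.sqrt ((p:ℝ)^2 * Real.pi^2 + ℓ₁^2) := Real.sqrt_sq hB
  have hβ₂ : β = ℓ₂ / (2 * Real.sqrt ((q:ℝ)^2 * Real.pi^2 + ℓ₂^2)) := by
    rw [hβ]
    field_simp
    have e : Real.sqrt (Real.pi^2*(q:ℝ)^2 + ℓ₂^2) = Real.sqrt ((q:ℝ)^2*Real.pi^2+ℓ₂^2) := by ring_nf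
    linear_combination hsqid + ℓ₁ * e
  -- β < 1/2
  have hβhalf : β < 1/2 := by
    have hlt : ℓ₁ < Real.sqrt ((p:ℝ)^2 * Real.pi^2 + ℓ₁^2) := by
      apply (Real.lt_sqrt h1.le).mpr
      have hpp : 0 < (p:ℝ)^2*Real.pi^2 := by positivity
      linarith
    rw [hβ, div_lt_div_iff₀ (by positivity) (by norm_num)]
    linarith
  -- key quadratic identities
  have hk1 : 4*β^2*(1+((p:ℝ)*Real.pi/ℓ₁)^2) = 1 := by
    have hBq : β^2 * (4 * ((p:ℝ)^2 * Real.pi^2 + ℓ₁^2)) = ℓ₁^2 := by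
      rw [hβ, div_pow, mul_pow, hsq1]
      field_simp
      norm_num
    field_simp [h1.ne']
    linear_combination hBq
  have hk2 : 4*β^2*(1+((q:ℝ)*Real.pi/ℓ₂)^2) = 1 := by
    have hBq : β^2 * (4 * ((q:ℝ)^2 * Real.pi^2 + ℓ₂^2)) = ℓ₂^2 := by
      rw [hβ₂, div_pow, mul_pow, hsq2]
      field_simp
      norm_num
    field_simp [h2.ne']
    linear_combination hBq
  set c : ℂ := -(Complex.I/(2*(β:ℂ))) with hc
  set k₁ : ℝ := (p:ℝ)*Real.pi/ℓ₁ with hk₁def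
  set k₂ : ℝ := (q:ℝ)*Real.pi/ℓ₂ with hk₂def
  have hfun1 : y₁ = fun t : ℝ => Complex.exp (c * t) * Complex.sin ((k₁:ℂ) * t) := by
    funext t
    rw [hy₁ t, show (p:ℝ)*Real.pi*t/ℓ₁ = k₁*t by rw [hk₁def]; ring, Complex.ofReal_sin]
    push_cast
    ring_nf
  have hfun2 : y₂ = fun t : ℝ => -(Complex.exp (c * t) * Complex.sin ((k₂:ℂ) * t)) := by
    funext t
    rw [hy₂ t, show (q:ℝ)*Real.pi*t/ℓ₂ = k₂*t by rw [hk₂def]; ring, Complex.ofReal_sin]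
    push_cast
    ring_nf
  have hd1 : ∀ t : ℝ, HasDerivAt y₁
      (Complex.exp (c*t) * (c * Complex.sin ((k₁:ℂ)*t) + (k₁:ℂ) * Complex.cos ((k₁:ℂ)*t))) t := by
    intro t; rw [hfun1]; exact (aux_g c (k₁:ℂ) (t:ℂ)).comp_ofReal
  have hD1 : deriv y₁ = fun t : ℝ =>
      Complex.exp (c*t) * (c * Complex.sin ((k₁:ℂ)*t) + (k₁:ℂ) * Complex.cos ((k₁:ℂ)*t)) :=
    funext fun t => (hd1 t).deriv
  have hd1' : ∀ t : ℝ, HasDerivAt (deriv y₁)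
      (Complex.exp (c*t) * ((c^2 - (k₁:ℂ)^2) * Complex.sin ((k₁:ℂ)*t)
        + 2*c*(k₁:ℂ) * Complex.cos ((k₁:ℂ)*t))) t := by
    intro t; rw [hD1]; exact (aux_g' c (k₁:ℂ) (t:ℂ)).comp_ofReal
  have hd2 : ∀ t : ℝ, HasDerivAt y₂
      (-(Complex.exp (c*t) * (c * Complex.sin ((k₂:ℂ)*t) + (k₂:ℂ) * Complex.cos ((k₂:ℂ)*t)))) t := by
    intro t; rw [hfun2]; exact ((aux_g c (k₂:ℂ) (t:ℂ)).comp_ofReal).neg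
  have hD2 : deriv y₂ = fun t : ℝ =>
      -(Complex.exp (c*t) * (c * Complex.sin ((k₂:ℂ)*t) + (k₂:ℂ) * Complex.cos ((k₂:ℂ)*t))) :=
    funext fun t => (hd2 t).deriv
  have hd2' : ∀ t : ℝ, HasDerivAt (deriv y₂)
      (-(Complex.exp (c*t) * ((c^2 - (k₂:ℂ)^2) * Complex.sin ((k₂:ℂ)*t)
        + 2*c*(k₂:ℂ) * Complex.cos ((k₂:ℂ)*t)))) t := by
    intro t; rw [hD2]; exact ((aux_g' c (k₂:ℂ) (t:ℂ)).comp_ofReal).neg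
  refine ⟨hβ₂, hβpos, hβhalf, ?_, ?_, ?_, ?_, ?_, ?_, ?_, ?_⟩
  · intro x _
    have h := aux_coeff β hβ0 k₁ hk1 (Complex.sin ((k₁:ℂ)*x)) (Complex.cos ((k₁:ℂ)*x))
      (Complex.exp (c*x))
    rw [← hc] at h
    rw [(hd1' x).deriv, (hd1 x).deriv]
    simp only [hfun1]
    linear_combination h
  · intro x _
    have h := aux_coeff β hβ0 k₂ hk2 (Complex.sin ((k₂:ℂ)*x)) (Complex.cos ((k₂:ℂ)*x))
      (Complex.exp (c*x))
    rw [← hc] at h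
    rw [(hd2' x).deriv, (hd2 x).deriv]
    simp only [hfun2]
    linear_combination -h
  · rw [hy₁]; simp
  · rw [hy₁, show (p:ℝ)*Real.pi*ℓ₁/ℓ₁ = (p:ℕ)*Real.pi by field_simp, Real.sin_nat_mul_pi]
    simp
  · rw [hy₂]; simp
  · rw [hy₂, show (q:ℝ)*Real.pi*ℓ₂/ℓ₂ = (q:ℕ)*Real.pi by field_simp, Real.sin_nat_mul_pi]
    simp
  · rw [(hd1 0).deriv, (hd2 0).deriv]
    have hkk : k₁ = k₂ := by
      rw [hk₁def, hk₂def]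
      field_simp
      linear_combination -hℓq
    simp [hkk]
  · refine ⟨ℓ₁/(2*(p:ℝ)), ⟨by positivity, ?_⟩, ?_⟩
    · rw [div_le_iff₀ (by positivity)]
      nlinarith
    · rw [hy₁, show (p:ℝ)*Real.pi*(ℓ₁/(2*(p:ℝ)))/ℓ₁ = Real.pi/2 by
        field_simp, Real.sin_pi_div_two]
      simp [Complex.exp_ne_zero]
end

section
/- Let N ≥ 2, ℓ_1, …, ℓ_N > 0 with ℓ_i/ℓ_j irrational for all i ≠ j, and let β ∈ ℝ \ {0}. Suppose y_j : [0, ℓ_j] → ℂ are C² functions satisfying iβ y_j − iβ y_j'' + y_j' = 0 on (0, ℓ_j), y_j(0) = y_j(ℓ_j) = 0 for all j, and ∑_{j=1}^N y_j'(0) = 0. Then y_j ≡ 0 for every j = 1, …, N. -/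
open Complex Set

lemma hasDerivAt_expc (a : ℂ) (x : ℝ) :
    HasDerivAt (fun t : ℝ => Complex.exp (a * t)) (a * Complex.exp (a * x)) x := by
  have h1 : HasDerivAt (fun z : ℂ => Complex.exp (a * z)) (a * Complex.exp (a * x)) (x:ℂ) := by
    simpa [mul_comm, Function.comp_def] using
      (Complex.hasDerivAt_exp (a * x)).comp (x:ℂ) ((hasDerivAt_id (x:ℂ)).const_mul a)
  exact h1.comp_ofReal

lemma const_on {ℓ : ℝ} (hℓ : 0 < ℓ) {f g : ℝ → ℂ} (hf : ∀ x, HasDerivAt f (g x) x)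
    (hg : Continuous g) (h0 : ∀ x ∈ Set.Ioo (0:ℝ) ℓ, g x = 0) :
    ∀ x ∈ Set.Icc (0:ℝ) ℓ, f x = f 0 := by
  have hIcc : ∀ x ∈ Set.Icc (0:ℝ) ℓ, g x = 0 := by
    have h : Set.EqOn g 0 (closure (Set.Ioo (0:ℝ) ℓ)) :=
      Set.EqOn.closure (fun x hx => h0 x hx) hg continuous_const
    rw [closure_Ioo hℓ.ne] at h
    exact fun x hx => h hx
  exact constant_of_has_deriv_right_zero
    (fun t _ => (hf t).continuousAt.continuousWithinAt)
    (fun t ht => by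
      have h := (hf t).hasDerivWithinAt (s := Set.Ici t)
      rwa [hIcc t ⟨ht.1, ht.2.le⟩] at h)

lemma key (r₁ r₂ : ℂ) (hprod : r₁ * r₂ = -1) {ℓ : ℝ} (hℓ : 0 < ℓ)
    {y : ℝ → ℂ} (hy : ContDiff ℝ 2 y)
    (hode : ∀ x ∈ Set.Ioo (0:ℝ) ℓ, deriv (deriv y) x = y x + (r₁ + r₂) * deriv y x)
    (hy0 : y 0 = 0) :
    ∀ x ∈ Set.Icc (0:ℝ) ℓ, r₁ * y x - deriv y x = -(deriv y 0) * Complex.exp (r₂ * x) := by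
  have h2 : ContDiff ℝ (1+1) y := by exact_mod_cast hy
  have hyd : Differentiable ℝ y := h2.differentiable (by norm_num)
  have hy1 : ContDiff ℝ 1 (deriv y) := (contDiff_succ_iff_deriv.mp h2).2.2
  have hy'd : Differentiable ℝ (deriv y) := (contDiff_one_iff_deriv.mp hy1).1
  have hy'' : Continuous (deriv (deriv y)) := (contDiff_one_iff_deriv.mp hy1).2
  set E : ℝ → ℂ := fun x => Complex.exp (-r₂ * x) with hEdef
  have hexp : ∀ x : ℝ, HasDerivAt E (-r₂ * E x) x := fun x => hasDerivAt_expc (-r₂) x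
  have hEc : Continuous E :=
    Complex.continuous_exp.comp (continuous_const.mul Complex.continuous_ofReal)
  set g : ℝ → ℂ := fun x =>
    (r₁ * deriv y x - deriv (deriv y) x) * E x + (r₁ * y x - deriv y x) * (-r₂ * E x) with hgdef
  have hu : ∀ x, HasDerivAt (fun x => (r₁ * y x - deriv y x) * E x) (g x) x := fun x =>
    (((hyd x).hasDerivAt.const_mul r₁).sub (hy'd x).hasDerivAt).mul (hexp x)
  have hgc : Continuous g := by
    apply Continuous.add
    · exact ((continuous_const.mul hy'd.continuous).sub hy'').mul hEc
    · exact ((continuous_const.mul hyd.continuous).sub hy'd.continuous).mul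
        (continuous_const.mul hEc)
  have hg0 : ∀ x ∈ Set.Ioo (0:ℝ) ℓ, g x = 0 := by
    intro x hx
    simp only [hgdef]
    rw [hode x hx]
    linear_combination (-(E x) * y x) * hprod
  have hconst := const_on hℓ hu hgc hg0
  intro x hx
  have h1 := hconst x hx
  have hE0 : E 0 = 1 := by simp [hEdef]
  rw [hE0, hy0, mul_zero, zero_sub, mul_one] at h1
  calc r₁ * y x - deriv y x
      = ((r₁ * y x - deriv y x) * E x) * Complex.exp (r₂ * x) := by
        rw [mul_assoc, hEdef]
        rw [← Complex.exp_add]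
        norm_num
    _ = -(deriv y 0) * Complex.exp (r₂ * x) := by rw [h1]

lemma formula (r₁ r₂ : ℂ) (hprod : r₁ * r₂ = -1) {ℓ : ℝ} (hℓ : 0 < ℓ)
    {y : ℝ → ℂ} (hy : ContDiff ℝ 2 y)
    (hode : ∀ x ∈ Set.Ioo (0:ℝ) ℓ, deriv (deriv y) x = y x + (r₁ + r₂) * deriv y x)
    (hy0 : y 0 = 0) :
    ∀ x ∈ Set.Icc (0:ℝ) ℓ, (r₁ - r₂) * y x
      = deriv y 0 * (Complex.exp (r₁ * x) - Complex.exp (r₂ * x)) := by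
  have k1 := key r₁ r₂ hprod hℓ hy hode hy0
  have k2 := key r₂ r₁ (by rw [mul_comm]; exact hprod) hℓ hy
    (by intro x hx; rw [add_comm r₂ r₁]; exact hode x hx) hy0
  intro x hx
  linear_combination (k1 x hx) - (k2 x hx)

lemma double (r : ℂ) (hprod : r * r = -1) {ℓ : ℝ} (hℓ : 0 < ℓ)
    {y : ℝ → ℂ} (hy : ContDiff ℝ 2 y)
    (hode : ∀ x ∈ Set.Ioo (0:ℝ) ℓ, deriv (deriv y) x = y x + (r + r) * deriv y x)
    (hy0 : y 0 = 0) (hyl : y ℓ = 0) :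
    ∀ x ∈ Set.Icc (0:ℝ) ℓ, y x = 0 := by
  have k := key r r hprod hℓ hy hode hy0
  have h2 : ContDiff ℝ (1+1) y := by exact_mod_cast hy
  have hyd : Differentiable ℝ y := h2.differentiable (by norm_num)
  have hy1 : ContDiff ℝ 1 (deriv y) := (contDiff_succ_iff_deriv.mp h2).2.2
  have hy'd : Differentiable ℝ (deriv y) := (contDiff_one_iff_deriv.mp hy1).1
  set E : ℝ → ℂ := fun x => Complex.exp (-r * x) with hEdef
  have hexp : ∀ x : ℝ, HasDerivAt E (-r * E x) x := fun x => hasDerivAt_expc (-r) x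
  have hEc : Continuous E :=
    Complex.continuous_exp.comp (continuous_const.mul Complex.continuous_ofReal)
  have hid : ∀ x : ℝ, HasDerivAt (fun t : ℝ => (t : ℂ)) 1 x := fun x => by
    simpa using (hasDerivAt_id x).ofReal_comp
  set g : ℝ → ℂ := fun x =>
    (deriv y x * E x + y x * (-r * E x)) - deriv y 0 * 1 with hgdef
  have hv : ∀ x, HasDerivAt (fun x => y x * E x - deriv y 0 * (x:ℂ)) (g x) x := fun x =>
    ((hyd x).hasDerivAt.mul (hexp x)).sub ((hid x).const_mul (deriv y 0))
  have hgc : Continuous g := by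
    apply Continuous.sub _ continuous_const
    exact (hy'd.continuous.mul hEc).add (hyd.continuous.mul (continuous_const.mul hEc))
  have hg0 : ∀ x ∈ Set.Ioo (0:ℝ) ℓ, g x = 0 := by
    intro x hx
    have hk := k x ⟨hx.1.le, hx.2.le⟩
    simp only [hgdef]
    have hEE : Complex.exp (r * x) * E x = 1 := by
      rw [hEdef]; rw [← Complex.exp_add]; norm_num
    linear_combination (-(E x)) * hk + (deriv y 0) * hEE
  have hconst := const_on hℓ hv hgc hg0
  have h00 : y 0 * E 0 - deriv y 0 * ((0:ℝ):ℂ) = 0 := by simp [hy0]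
  have hform : ∀ x ∈ Set.Icc (0:ℝ) ℓ, y x * E x = deriv y 0 * (x:ℂ) := by
    intro x hx
    have := hconst x hx
    rw [h00] at this
    linear_combination this
  have hd0 : deriv y 0 = 0 := by
    have hl := hform ℓ ⟨hℓ.le, le_refl ℓ⟩
    rw [hyl, zero_mul] at hl
    have hlne : ((ℓ:ℝ) : ℂ) ≠ 0 := by exact_mod_cast hℓ.ne'
    exact (mul_eq_zero.mp hl.symm).resolve_right hlne
  intro x hx
  have := hform x hx
  rw [hd0, zero_mul] at this
  exact (mul_eq_zero.mp this).resolve_right (Complex.exp_ne_zero _)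

theorem stmt_7 (N : ℕ) (hN : 2 ≤ N) (ℓ : Fin N → ℝ) (hℓ : ∀ j, 0 < ℓ j)
    (hirr : ∀ i j, i ≠ j → Irrational (ℓ i / ℓ j)) (β : ℝ) (hβ : β ≠ 0)
    (y : Fin N → ℝ → ℂ) (hy : ∀ j, ContDiff ℝ 2 (y j))
    (hode : ∀ j, ∀ x ∈ Set.Ioo (0:ℝ) (ℓ j),
      Complex.I * (β:ℂ) * y j x - Complex.I * (β:ℂ) * deriv (deriv (y j)) x + deriv (y j) x = 0)
    (h0 : ∀ j, y j 0 = 0) (hend : ∀ j, y j (ℓ j) = 0)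
    (hflux : ∑ j, deriv (y j) 0 = 0) :
    ∀ j, ∀ x ∈ Set.Icc (0:ℝ) (ℓ j), y j x = 0 := by
  have hβc : (β:ℂ) ≠ 0 := Complex.ofReal_ne_zero.mpr hβ
  obtain ⟨s, hs⟩ : ∃ s : ℂ, s ^ 2 = (Complex.I / β) ^ 2 + 4 :=
    IsAlgClosed.exists_pow_nat_eq _ zero_lt_two
  set r₁ : ℂ := (-(Complex.I / β) + s) / 2 with hr₁
  set r₂ : ℂ := (-(Complex.I / β) - s) / 2 with hr₂
  have hprod : r₁ * r₂ = -1 := by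
    rw [hr₁, hr₂]; linear_combination (-1/4 : ℂ) * hs
  have hsub : r₁ - r₂ = s := by rw [hr₁, hr₂]; ring
  have hS : (β : ℂ) * (r₁ + r₂) = -Complex.I := by
    rw [hr₁, hr₂]; field_simp; ring
  have hode' : ∀ j, ∀ x ∈ Set.Ioo (0:ℝ) (ℓ j),
      deriv (deriv (y j)) x = y j x + (r₁ + r₂) * deriv (y j) x := by
    intro j x hx
    have h := hode j x hx
    apply mul_left_cancel₀ (mul_ne_zero Complex.I_ne_zero hβc)
    linear_combination (-1 : ℂ) * h + (-Complex.I * deriv (y j) x) * hS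
      + (deriv (y j) x) * Complex.I_sq
  by_cases hs0 : s = 0
  · -- double root
    have hr : r₂ = r₁ := by
      have := hsub; rw [hs0] at this; linear_combination -this
    rw [hr] at hprod hode'
    intro j
    exact double r₁ hprod (hℓ j) (hy j) (hode' j) (h0 j) (hend j)
  · -- distinct roots
    have dich : ∀ j, deriv (y j) 0 ≠ 0 →
        ∃ n : ℤ, n ≠ 0 ∧ s * (ℓ j) = n * (2 * Real.pi * Complex.I) := by
      intro j hd
      have hf := formula r₁ r₂ hprod (hℓ j) (hy j) (hode' j) (h0 j) (ℓ j)
        ⟨(hℓ j).le, le_refl _⟩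
      rw [hend j, mul_zero] at hf
      have hdiff : Complex.exp (r₁ * ℓ j) - Complex.exp (r₂ * ℓ j) = 0 :=
        (mul_eq_zero.mp hf.symm).resolve_left hd
      obtain ⟨n, hn⟩ := Complex.exp_eq_exp_iff_exists_int.mp (sub_eq_zero.mp hdiff)
      have hlc : ((ℓ j : ℝ) : ℂ) ≠ 0 := Complex.ofReal_ne_zero.mpr (hℓ j).ne'
      have hsl : s * (ℓ j) = n * (2 * Real.pi * Complex.I) := by
        linear_combination hn - ((ℓ j : ℝ) : ℂ) * hsub
      refine ⟨n, ?_, hsl⟩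
      rintro rfl
      rw [Int.cast_zero, zero_mul] at hsl
      exact (mul_ne_zero hs0 hlc) hsl
    have hall : ∀ j, deriv (y j) 0 = 0 := by
      by_contra hcon
      push_neg at hcon
      obtain ⟨j₀, hj₀⟩ := hcon
      have hz : ∀ i, i ≠ j₀ → deriv (y i) 0 = 0 := by
        intro i hij
        by_contra hi
        obtain ⟨ni, hni0, hni⟩ := dich i hi
        obtain ⟨nj, hnj0, hnj⟩ := dich j₀ hj₀
        have hC : ((ℓ i : ℝ) : ℂ) * nj = ((ℓ j₀ : ℝ) : ℂ) * ni := by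
          apply mul_left_cancel₀ hs0
          linear_combination (nj : ℂ) * hni - (ni : ℂ) * hnj
        have hR : ℓ i * (nj : ℝ) = ℓ j₀ * (ni : ℝ) := by exact_mod_cast hC
        have hQ : ℓ i / ℓ j₀ = ((ni / nj : ℚ) : ℝ) := by
          push_cast
          rw [div_eq_div_iff (hℓ j₀).ne' (Int.cast_ne_zero.mpr hnj0)]
          linarith [hR]
        exact (hirr i j₀ hij) ⟨_, hQ.symm⟩
      have hsum : ∑ j, deriv (y j) 0 = deriv (y j₀) 0 :=
        Finset.sum_eq_single_of_mem j₀ (Finset.mem_univ _) (fun b _ hb => hz b hb)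
      exact hj₀ (by rw [← hsum]; exact hflux)
    intro j x hx
    have hf := formula r₁ r₂ hprod (hℓ j) (hy j) (hode' j) (h0 j) x hx
    rw [hall j, zero_mul, hsub] at hf
    exact (mul_eq_zero.mp hf).resolve_left hs0
end

section
/- Let N ≥ 2. Suppose there exist indices i ≠ j with ℓ_i/ℓ_j ∈ ℚ, where ℓ_1, …, ℓ_N > 0. Then there exist a nonzero real β and C² functions y_1, …, y_N (y_k : [0, ℓ_k] → ℂ), not all identically zero, such that iβ y_k − iβ y_k'' + y_k' = 0 on (0, ℓ_k), y_k(0) = y_k(ℓ_k) = 0 for all k, and ∑_{k=1}^N y_k'(0) = 0. -/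
lemma expHasDeriv (c : ℂ) (x : ℝ) :
    HasDerivAt (fun t : ℝ => Complex.exp (c * t)) (c * Complex.exp (c * x)) x := by
  have h1 : HasDerivAt (fun w : ℂ => Complex.exp (c * w)) (c * Complex.exp (c * x)) x := by
    exact ((Complex.hasDerivAt_exp (c * x)).comp (x : ℂ)
      ((hasDerivAt_id (x : ℂ)).const_mul c)).congr_deriv (by ring)
  exact h1.comp_ofReal

lemma expContDiff (c : ℂ) : ContDiff ℝ 2 (fun t : ℝ => Complex.exp (c * t)) := by
  have h1 : ContDiff ℝ 2 (fun t : ℝ => (c * t : ℂ)) :=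
    contDiff_const.mul Complex.ofRealCLM.contDiff
  exact Complex.contDiff_exp.comp h1

lemma rootEq (β s : ℝ) (h : β * (1 + s ^ 2) + s = 0) :
    Complex.I * β - Complex.I * β * (Complex.I * s) ^ 2 + Complex.I * s = 0 := by
  have hsq : (Complex.I * (s : ℂ)) ^ 2 = -((s : ℂ) ^ 2) := by
    rw [mul_pow, Complex.I_sq]; ring
  have h' : (β : ℂ) * (1 + (s : ℂ) ^ 2) + (s : ℂ) = 0 := by
    exact_mod_cast congrArg (fun x : ℝ => (x : ℂ)) h
  rw [hsq]
  linear_combination Complex.I * h'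

theorem stmt_8 (N : ℕ) (hN : 2 ≤ N) (ℓ : Fin N → ℝ) (hℓ : ∀ j, 0 < ℓ j)
    (i j : Fin N) (hij : i ≠ j) (hrat : ∃ r : ℚ, ℓ i / ℓ j = (r:ℝ)) :
    ∃ β : ℝ, β ≠ 0 ∧ ∃ y : Fin N → ℝ → ℂ,
      (∀ k, ContDiff ℝ 2 (y k)) ∧
      (∀ k, ∀ x ∈ Set.Ioo (0:ℝ) (ℓ k),
        Complex.I * (β:ℂ) * y k x - Complex.I * (β:ℂ) * deriv (deriv (y k)) x + deriv (y k) x = 0) ∧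
      (∀ k, y k 0 = 0) ∧ (∀ k, y k (ℓ k) = 0) ∧
      (∑ k, deriv (y k) 0 = 0) ∧
      (∃ k, ∃ x ∈ Set.Icc (0:ℝ) (ℓ k), y k x ≠ 0) := by
  obtain ⟨r, hr⟩ := hrat
  have hli := hℓ i
  have hlj := hℓ j
  have hrpos : (0:ℝ) < (r:ℝ) := by rw [← hr]; positivity
  have hrq : (0:ℚ) < r := by exact_mod_cast hrpos
  set p : ℕ := r.num.toNat with hp
  set q : ℕ := r.den with hq
  have hnum : 0 < r.num := Rat.num_pos.mpr hrq
  have hppos : 0 < p := by omega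
  have hqpos : 0 < q := r.pos
  have hrval : (r:ℝ) = (p : ℝ) / (q : ℝ) := by
    rw [Rat.cast_def]
    congr 1
    · rw [hp]
      exact_mod_cast (Int.toNat_of_nonneg hnum.le).symm
  have hkey : ℓ i * q = ℓ j * p := by
    rw [hrval] at hr
    have hq0 : (q : ℝ) ≠ 0 := by positivity
    have hj0 : ℓ j ≠ 0 := ne_of_gt hlj
    field_simp at hr
    linarith [hr]
  set μ : ℝ := 2 * Real.pi * p / ℓ i with hμdef
  have hπ := Real.pi_pos
  have hμpos : 0 < μ := by
    apply div_pos
    · positivity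
    · exact hli
  have hμi : μ * ℓ i = 2 * Real.pi * p := by
    rw [hμdef]; field_simp
  have hμj : μ * ℓ j = 2 * Real.pi * q := by
    rw [hμdef]
    rw [div_mul_eq_mul_div, div_eq_iff (ne_of_gt hli)]
    nlinarith [hkey]
  set β : ℝ := (Real.sqrt (μ ^ 2 + 4))⁻¹ with hβdef
  have hsq4 : (0:ℝ) < μ ^ 2 + 4 := by positivity
  have hsqrt : 0 < Real.sqrt (μ ^ 2 + 4) := Real.sqrt_pos.mpr hsq4
  have hβpos : 0 < β := by rw [hβdef]; positivity
  have hβne : β ≠ 0 := ne_of_gt hβpos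
  have hβμ : β ^ 2 * (μ ^ 2 + 4) = 1 := by
    rw [hβdef, inv_pow, inv_mul_eq_div, div_eq_one_iff_eq (by positivity)]
    exact (Real.sq_sqrt hsq4.le).symm
  set s1 : ℝ := (μ - 1 / β) / 2 with hs1def
  set s2 : ℝ := (-μ - 1 / β) / 2 with hs2def
  have hs1 : β * (1 + s1 ^ 2) + s1 = 0 := by
    have h4 : 4 * β * (β * (1 + s1 ^ 2) + s1) = β ^ 2 * (μ ^ 2 + 4) - 1 := by
      rw [hs1def]; field_simp; ring
    have : 4 * β * (β * (1 + s1 ^ 2) + s1) = 0 := by rw [h4, hβμ]; ring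
    have h4β : (4:ℝ) * β ≠ 0 := by positivity
    exact (mul_eq_zero.mp this).resolve_left h4β
  have hs2 : β * (1 + s2 ^ 2) + s2 = 0 := by
    have h4 : 4 * β * (β * (1 + s2 ^ 2) + s2) = β ^ 2 * (μ ^ 2 + 4) - 1 := by
      rw [hs2def]; field_simp; ring
    have : 4 * β * (β * (1 + s2 ^ 2) + s2) = 0 := by rw [h4, hβμ]; ring
    have h4β : (4:ℝ) * β ≠ 0 := by positivity
    exact (mul_eq_zero.mp this).resolve_left h4β
  have hss : s1 - s2 = μ := by rw [hs1def, hs2def]; ring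
  set r1 : ℂ := Complex.I * (s1 : ℂ) with hr1def
  set r2 : ℂ := Complex.I * (s2 : ℂ) with hr2def
  set g : ℝ → ℂ := fun t => Complex.exp (r1 * t) - Complex.exp (r2 * t) with hgdef
  -- vanishing of g at points where μ * L = 2π n
  have hgL : ∀ (L : ℝ) (n : ℕ), μ * L = 2 * Real.pi * n → g L = 0 := by
    intro L n hL
    have hreal : s1 * L = s2 * L + 2 * Real.pi * n := by linear_combination hL + L * hss
    have hc : r1 * (L : ℂ) = r2 * L + (n : ℂ) * (2 * Real.pi * Complex.I) := by
      have := congrArg (fun x : ℝ => (x : ℂ)) hreal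
      push_cast at this
      rw [hr1def, hr2def]
      linear_combination Complex.I * this
    have hone : Complex.exp ((n : ℂ) * (2 * Real.pi * Complex.I)) = 1 := by
      have := Complex.exp_int_mul_two_pi_mul_I (n : ℤ)
      push_cast at this
      exact this
    simp only [hgdef, hc, Complex.exp_add, hone, mul_one, sub_self]
  set c : Fin N → ℂ := fun k => (if k = i then (1:ℂ) else 0) + (if k = j then (-1:ℂ) else 0)
    with hcdef
  refine ⟨β, hβne, fun k t => c k * g t, ?_, ?_, ?_, ?_, ?_, ?_⟩
  · intro k
    exact contDiff_const.mul ((expContDiff r1).sub (expContDiff r2))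
  · -- ODE
    intro k x _
    show Complex.I * (β:ℂ) * (c k * g x) -
        Complex.I * (β:ℂ) * deriv (deriv (fun t : ℝ => c k * g t)) x +
        deriv (fun t : ℝ => c k * g t) x = 0
    have hyd : ∀ z : ℝ, HasDerivAt (fun t : ℝ => c k * g t)
        (c k * (r1 * Complex.exp (r1 * z) - r2 * Complex.exp (r2 * z))) z := by
      intro z
      exact ((expHasDeriv r1 z).sub (expHasDeriv r2 z)).const_mul (c k)
    have hderiv1 : deriv (fun t : ℝ => c k * g t) =
        fun z : ℝ => c k * (r1 * Complex.exp (r1 * z) - r2 * Complex.exp (r2 * z)) :=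
      funext fun z => (hyd z).deriv
    have hyd2 : HasDerivAt (deriv (fun t : ℝ => c k * g t))
        (c k * (r1 ^ 2 * Complex.exp (r1 * x) - r2 ^ 2 * Complex.exp (r2 * x))) x := by
      rw [hderiv1]
      have := (((expHasDeriv r1 x).const_mul r1).sub
        ((expHasDeriv r2 x).const_mul r2)).const_mul (c k)
      exact this.congr_deriv (by ring)
    rw [hyd2.deriv, hderiv1]
    simp only []
    have hr1eq : Complex.I * β - Complex.I * β * r1 ^ 2 + r1 = 0 := by
      rw [hr1def]; exact rootEq β s1 hs1
    have hr2eq : Complex.I * β - Complex.I * β * r2 ^ 2 + r2 = 0 := by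
      rw [hr2def]; exact rootEq β s2 hs2
    simp only [hgdef]
    linear_combination (c k * Complex.exp (r1 * x)) * hr1eq -
      (c k * Complex.exp (r2 * x)) * hr2eq
  · intro k
    show c k * g 0 = 0
    simp [hgdef]
  · -- boundary at ℓ k
    intro k
    show c k * g (ℓ k) = 0
    by_cases hki : k = i
    · subst hki
      rw [hgL (ℓ k) p (by rw [hμi])]
      ring
    · by_cases hkj : k = j
      · subst hkj
        rw [hgL (ℓ k) q (by rw [hμj])]
        ring
      · have : c k = 0 := by simp [hcdef, hki, hkj]
        rw [this]; ring
  · -- sum of derivatives at 0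
    have hd0 : ∀ k, deriv (fun t : ℝ => c k * g t) 0 = c k * (r1 - r2) := by
      intro k
      have hyd : HasDerivAt (fun t : ℝ => c k * g t)
          (c k * (r1 * Complex.exp (r1 * 0) - r2 * Complex.exp (r2 * 0))) 0 :=
        ((expHasDeriv r1 0).sub (expHasDeriv r2 0)).const_mul (c k)
      rw [hyd.deriv]
      norm_num
    show ∑ k, deriv (fun t : ℝ => c k * g t) 0 = 0
    simp only [hd0]
    rw [← Finset.sum_mul]
    have : ∑ k, c k = 0 := by
      simp only [hcdef]
      rw [Finset.sum_add_distrib]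
      simp [Finset.sum_ite_eq', hij]
    rw [this, zero_mul]
  · -- not identically zero
    refine ⟨i, Real.pi / μ, ⟨by positivity, ?_⟩, ?_⟩
    · rw [div_le_iff₀ hμpos]
      nlinarith [hμi, hppos, Real.pi_pos, (by exact_mod_cast hppos : (1:ℝ) ≤ p)]
    · show c i * g (Real.pi / μ) ≠ 0
      have hci : c i = 1 := by simp [hcdef, hij]
      rw [hci, one_mul]
      have hx0 : μ * (Real.pi / μ) = Real.pi := by field_simp
      have hreal : s1 * (Real.pi / μ) = s2 * (Real.pi / μ) + Real.pi := by
        linear_combination hx0 + (Real.pi / μ) * hss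
      have hc2 : r1 * ((Real.pi / μ : ℝ) : ℂ) = r2 * ((Real.pi / μ : ℝ) : ℂ)
          + Real.pi * Complex.I := by
        have := congrArg (fun x : ℝ => (x : ℂ)) hreal
        push_cast at this
        rw [hr1def, hr2def]
        push_cast
        linear_combination Complex.I * this
      simp only [hgdef]
      rw [hc2, Complex.exp_add, Complex.exp_pi_mul_I]
      intro h
      exact Complex.exp_ne_zero (r2 * ((Real.pi / μ : ℝ) : ℂ))
        (by linear_combination (-(1:ℂ)/2) * h)
end

section
/- Let N ≥ 1, α > N/2, ℓ_1, …, ℓ_N > 0, and let u_j : [0, T] × [0, ℓ_j] → ℝ be smooth functions satisfying ∂_t u_j − ∂_x²∂_t u_j + ∂_x u_j = 0 on (0, T) × (0, ℓ_j), u_j(t, 0) = u_k(t, 0) for all j, k, ∑_{j=1}^N ∂_x ∂_t u_j(t, 0) = α u_1(t, 0), and u_j(t, ℓ_j) = 0. Then the energy E(t) = (1/2) ∑_{j=1}^N ∫_0^{ℓ_j} (|u_j(t,x)|² + |∂_x u_j(t,x)|²) dx satisfies E'(t) = −(α − N/2) |u_1(t, 0)|² ≤ 0 for all t ∈ (0,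 T). In particular E is nonincreasing. -/
open Set MeasureTheory intervalIntegral

namespace Stmt9Aux

noncomputable def P1 (f : ℝ × ℝ → ℝ) (p : ℝ × ℝ) : ℝ := fderiv ℝ f p (1, 0)
noncomputable def P2 (f : ℝ × ℝ → ℝ) (p : ℝ × ℝ) : ℝ := fderiv ℝ f p (0, 1)

lemma contDiff_P1 {f : ℝ × ℝ → ℝ} (hf : ContDiff ℝ (⊤ : ℕ∞) f) : ContDiff ℝ (⊤ : ℕ∞) (P1 f) :=
  ((ContinuousLinearMap.apply ℝ ℝ (((1:ℝ),(0:ℝ)) : ℝ × ℝ)).contDiff).comp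
    (hf.fderiv_right (by simp))

lemma contDiff_P2 {f : ℝ × ℝ → ℝ} (hf : ContDiff ℝ (⊤ : ℕ∞) f) : ContDiff ℝ (⊤ : ℕ∞) (P2 f) :=
  ((ContinuousLinearMap.apply ℝ ℝ (((0:ℝ),(1:ℝ)) : ℝ × ℝ)).contDiff).comp
    (hf.fderiv_right (by simp))

lemma hasDerivAt_fst {f : ℝ × ℝ → ℝ} (hf : ContDiff ℝ (⊤ : ℕ∞) f) (t x : ℝ) :
    HasDerivAt (fun t' => f (t', x)) (P1 f (t, x)) t := by
  have h := ((hf.differentiable (by simp) (t, x)).hasFDerivAt).comp_hasDerivAt t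
    ((hasDerivAt_id t).prodMk (hasDerivAt_const t x))
  simpa [P1, Function.comp_def] using h

lemma hasDerivAt_snd {f : ℝ × ℝ → ℝ} (hf : ContDiff ℝ (⊤ : ℕ∞) f) (t x : ℝ) :
    HasDerivAt (fun x' => f (t, x')) (P2 f (t, x)) x := by
  have h := ((hf.differentiable (by simp) (t, x)).hasFDerivAt).comp_hasDerivAt x
    ((hasDerivAt_const x t).prodMk (hasDerivAt_id x))
  simpa [P2, Function.comp_def] using h

lemma deriv_fst {f : ℝ × ℝ → ℝ} (hf : ContDiff ℝ (⊤ : ℕ∞) f) (t x : ℝ) :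
    deriv (fun t' => f (t', x)) t = P1 f (t, x) := (hasDerivAt_fst hf t x).deriv

lemma deriv_snd {f : ℝ × ℝ → ℝ} (hf : ContDiff ℝ (⊤ : ℕ∞) f) (t x : ℝ) :
    deriv (fun x' => f (t, x')) x = P2 f (t, x) := (hasDerivAt_snd hf t x).deriv

lemma clairaut {f : ℝ × ℝ → ℝ} (hf : ContDiff ℝ (⊤ : ℕ∞) f) (p : ℝ × ℝ) :
    P1 (P2 f) p = P2 (P1 f) p := by
  have hd : Differentiable ℝ (fderiv ℝ f) := (hf.fderiv_right (m := (⊤ : ℕ∞)) (by simp)).differentiable (by simp)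
  have h2 : HasFDerivAt (P2 f)
      ((ContinuousLinearMap.apply ℝ ℝ (((0:ℝ),(1:ℝ)) : ℝ × ℝ)).comp
        (fderiv ℝ (fderiv ℝ f) p)) p :=
    (ContinuousLinearMap.apply ℝ ℝ (((0:ℝ),(1:ℝ)) : ℝ × ℝ)).hasFDerivAt.comp p
      (hd p).hasFDerivAt
  have h1 : HasFDerivAt (P1 f)
      ((ContinuousLinearMap.apply ℝ ℝ (((1:ℝ),(0:ℝ)) : ℝ × ℝ)).comp
        (fderiv ℝ (fderiv ℝ f) p)) p :=
    (ContinuousLinearMap.apply ℝ ℝ (((1:ℝ),(0:ℝ)) : ℝ × ℝ)).hasFDerivAt.comp p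
      (hd p).hasFDerivAt
  have hsymm := (hf.contDiffAt (x := p)).isSymmSndFDerivAt ((by rw [minSmoothness_of_isRCLikeNormedField]; exact WithTop.coe_le_coe.mpr (le_top : (2:ℕ∞) ≤ ⊤)))
  have e2 : fderiv ℝ (P2 f) p = (ContinuousLinearMap.apply ℝ ℝ (((0:ℝ),(1:ℝ)) : ℝ × ℝ)).comp
      (fderiv ℝ (fderiv ℝ f) p) := h2.fderiv
  have e1 : fderiv ℝ (P1 f) p = (ContinuousLinearMap.apply ℝ ℝ (((1:ℝ),(0:ℝ)) : ℝ × ℝ)).comp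
      (fderiv ℝ (fderiv ℝ f) p) := h1.fderiv
  simp only [P1, P2, e1, e2, ContinuousLinearMap.coe_comp', Function.comp_apply,
    ContinuousLinearMap.apply_apply]
  exact hsymm _ _


noncomputable def Fd (f : ℝ × ℝ → ℝ) (s x : ℝ) : ℝ :=
  2 * (f (s, x) * P1 f (s, x) + P2 f (s, x) * P2 (P1 f) (s, x))

lemma hasDerivAt_F (hf : ContDiff ℝ (⊤ : ℕ∞) f) (s x : ℝ) :
    HasDerivAt (fun s' => (f (s', x))^2 + (P2 f (s', x))^2) (Fd f s x) s := by
  have h1 := (hasDerivAt_fst hf s x).pow 2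
  have h2 := (hasDerivAt_fst (contDiff_P2 hf) s x).pow 2
  rw [clairaut hf] at h2
  refine (h1.add h2).congr_deriv (Eq.symm ?_)
  simp [Fd]; ring

lemma edge_deriv (hf : ContDiff ℝ (⊤ : ℕ∞) f) {L : ℝ} (hL : 0 < L)
    {T t : ℝ} (ht : t ∈ Ioo 0 T)
    (hpde : ∀ s ∈ Ioo (0:ℝ) T, ∀ x ∈ Ioo (0:ℝ) L,
      P1 f (s, x) - P2 (P2 (P1 f)) (s, x) + P2 f (s, x) = 0) :
    HasDerivAt (fun s => ∫ x in (0:ℝ)..L, ((f (s, x))^2 + (P2 f (s, x))^2))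
      (2 * ((f (t, L) * P2 (P1 f) (t, L) - (f (t, L))^2 / 2)
        - (f (t, 0) * P2 (P1 f) (t, 0) - (f (t, 0))^2 / 2))) t := by
  -- continuity facts
  have hcF : Continuous (Function.uncurry fun s x => (f (s, x))^2 + (P2 f (s, x))^2) := by
    have : Continuous f := hf.continuous
    have := (contDiff_P2 hf).continuous
    fun_prop
  have hcFd : Continuous (Function.uncurry (Fd f)) := by
    have h0 : Continuous f := hf.continuous
    have h1 : Continuous (P1 f) := (contDiff_P1 hf).continuous
    have h2 : Continuous (P2 f) := (contDiff_P2 hf).continuous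
    have h3 : Continuous (P2 (P1 f)) := (contDiff_P2 (contDiff_P1 hf)).continuous
    unfold Fd Function.uncurry
    fun_prop
  -- bound on compact set
  have hK : IsCompact ((Icc (t-1) (t+1)) ×ˢ (uIcc (0:ℝ) L)) :=
    isCompact_Icc.prod isCompact_uIcc
  obtain ⟨M, hM⟩ := hK.exists_bound_of_continuousOn hcFd.continuousOn
  -- differentiation under the integral sign
  have key := hasDerivAt_integral_of_dominated_loc_of_deriv_le (μ := volume)
      (F := fun s x => (f (s, x))^2 + (P2 f (s, x))^2) (F' := Fd f)
      (x₀ := t) (a := 0) (b := L) (bound := fun _ => M)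
      (Metric.ball_mem_nhds t one_pos)
      (Filter.Eventually.of_forall fun s =>
        ((hcF.comp (Continuous.prodMk_right s)).aestronglyMeasurable))
      ((hcF.comp (Continuous.prodMk_right t)).continuousOn.intervalIntegrable)
      ((hcFd.comp (Continuous.prodMk_right t)).aestronglyMeasurable)
      (Filter.Eventually.of_forall fun x hx s hs => by
        have hs' : s ∈ Icc (t-1) (t+1) := by
          rw [Real.ball_eq_Ioo] at hs; exact Ioo_subset_Icc_self hs
        exact hM (s, x) (mk_mem_prod hs' (uIoc_subset_uIcc hx)))
      (intervalIntegrable_const)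
      (Filter.Eventually.of_forall fun x hx s hs => hasDerivAt_F hf s x)
  -- extend PDE to the closed interval by continuity
  have hpde' : ∀ x ∈ Icc (0:ℝ) L,
      P1 f (t, x) - P2 (P2 (P1 f)) (t, x) + P2 f (t, x) = 0 := by
    have hc : Continuous fun x =>
        P1 f (t, x) - P2 (P2 (P1 f)) (t, x) + P2 f (t, x) := by
      have h1 : Continuous (P1 f) := (contDiff_P1 hf).continuous
      have h2 : Continuous (P2 f) := (contDiff_P2 hf).continuous
      have h3 : Continuous (P2 (P2 (P1 f))) :=
        (contDiff_P2 (contDiff_P2 (contDiff_P1 hf))).continuous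
      fun_prop
    have heq : EqOn (fun x => P1 f (t, x) - P2 (P2 (P1 f)) (t, x) + P2 f (t, x))
        (fun _ => (0:ℝ)) (Ioo 0 L) := fun x hx => hpde t ht x hx
    have hcl := heq.closure hc continuous_const
    rw [closure_Ioo hL.ne] at hcl
    exact fun x hx => hcl hx
  -- fundamental theorem of calculus for the boundary term
  set G : ℝ → ℝ := fun x => 2 * (f (t, x) * P2 (P1 f) (t, x) - (f (t, x))^2 / 2) with hG
  have hGderiv : ∀ x ∈ uIcc (0:ℝ) L, HasDerivAt G (Fd f t x) x := by
    intro x hx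
    rw [uIcc_of_le hL.le] at hx
    have hA := hasDerivAt_snd hf t x
    have hB := hasDerivAt_snd (contDiff_P2 (contDiff_P1 hf)) t x
    have hD := ((hA.mul hB).sub ((hA.pow 2).div_const 2)).const_mul 2
    refine hD.congr_deriv (Eq.symm ?_)
    have e : P2 (P2 (P1 f)) (t, x) = P1 f (t, x) + P2 f (t, x) := by
      linarith [hpde' x hx]
    rw [e]; simp [Fd]; ring
  have hFTC : ∫ x in (0:ℝ)..L, Fd f t x = G L - G 0 :=
    integral_eq_sub_of_hasDerivAt hGderiv
      ((hcFd.comp (Continuous.prodMk_right t)).continuousOn.intervalIntegrable)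
  have := key.2
  rw [show (fun x => Fd f t x) = Fd f t from rfl] at hFTC
  rw [hFTC] at this
  refine this.congr_deriv (Eq.symm ?_)
  simp [hG]; ring



end Stmt9Aux

open Set MeasureTheory intervalIntegral Stmt9Aux in
theorem stmt_9 (N : ℕ) (hN : 0 < N) (α T : ℝ) (hα : (N:ℝ)/2 < α) (hT : 0 < T)
    (ℓ : Fin N → ℝ) (hℓ : ∀ j, 0 < ℓ j)
    (u : Fin N → ℝ → ℝ → ℝ)
    (hu : ∀ j, ContDiff ℝ (⊤ : ℕ∞) (Function.uncurry (u j)))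
    (hpde : ∀ j, ∀ t ∈ Set.Ioo (0:ℝ) T, ∀ x ∈ Set.Ioo (0:ℝ) (ℓ j),
      deriv (fun t' => u j t' x) t
        - deriv (deriv (fun x' => deriv (fun t' => u j t' x') t)) x
        + deriv (fun x' => u j t x') x = 0)
    (hcont : ∀ j k, ∀ t ∈ Set.Icc (0:ℝ) T, u j t 0 = u k t 0)
    (hflux : ∀ t ∈ Set.Ioo (0:ℝ) T,
      ∑ j, deriv (fun x' => deriv (fun t' => u j t' x') t) 0 = α * u ⟨0, hN⟩ t 0)
    (hdir : ∀ j, ∀ t ∈ Set.Icc (0:ℝ) T, u j t (ℓ j) = 0)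
    (E : ℝ → ℝ)
    (hE : ∀ t, E t = (1/2) * ∑ j, ∫ x in (0:ℝ)..(ℓ j),
      ((u j t x)^2 + (deriv (fun x' => u j t x') x)^2)) :
    (∀ t ∈ Set.Ioo (0:ℝ) T,
      HasDerivAt E (-(α - (N:ℝ)/2) * (u ⟨0, hN⟩ t 0)^2) t ∧
      -(α - (N:ℝ)/2) * (u ⟨0, hN⟩ t 0)^2 ≤ 0) ∧
    AntitoneOn E (Set.Icc 0 T) := by
  set f : Fin N → ℝ × ℝ → ℝ := fun j => Function.uncurry (u j) with hfdef
  have hf : ∀ j, ContDiff ℝ (⊤ : ℕ∞) (f j) := hu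
  set j0 : Fin N := ⟨0, hN⟩ with hj0
  -- rewrite E
  have hE' : E = fun t => (1/2) * ∑ j, ∫ x in (0:ℝ)..(ℓ j),
      ((f j (t, x))^2 + (P2 (f j) (t, x))^2) := by
    funext t
    rw [hE t]
    congr 1
    refine Finset.sum_congr rfl fun j _ => ?_
    congr 1
    funext x
    have : (fun x' => u j t x') = fun x' => f j (t, x') := rfl
    rw [this, deriv_snd (hf j)]
    rfl
  -- mixed derivative rewriting
  have hmix : ∀ j t, (fun x' => deriv (fun t' => u j t' x') t)
      = fun x' => P1 (f j) (t, x') := by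
    intro j t
    funext x'
    exact deriv_fst (hf j) t x'
  have hmix2 : ∀ j t, deriv (fun x' => P1 (f j) (t, x'))
      = fun x => P2 (P1 (f j)) (t, x) := by
    intro j t
    funext x
    exact deriv_snd (contDiff_P1 (hf j)) t x
  -- PDE in P-form
  have hpdeP : ∀ j, ∀ t ∈ Ioo (0:ℝ) T, ∀ x ∈ Ioo (0:ℝ) (ℓ j),
      P1 (f j) (t, x) - P2 (P2 (P1 (f j))) (t, x) + P2 (f j) (t, x) = 0 := by
    intro j t ht x hx
    have h := hpde j t ht x hx
    rw [hmix j t, hmix2 j t] at h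
    have e1 : deriv (fun t' => u j t' x) t = P1 (f j) (t, x) := deriv_fst (hf j) t x
    have e2 : deriv (fun y => P2 (P1 (f j)) (t, y)) x = P2 (P2 (P1 (f j))) (t, x) :=
      deriv_snd (contDiff_P2 (contDiff_P1 (hf j))) t x
    have e3 : deriv (fun x' => u j t x') x = P2 (f j) (t, x) := deriv_snd (hf j) t x
    rw [e1, e2, e3] at h
    exact h
  -- flux in P-form
  have hfluxP : ∀ t ∈ Ioo (0:ℝ) T,
      ∑ j, P2 (P1 (f j)) (t, 0) = α * f j0 (t, 0) := by
    intro t ht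
    have h := hflux t ht
    have : ∀ j : Fin N, deriv (fun x' => deriv (fun t' => u j t' x') t) 0
        = P2 (P1 (f j)) (t, 0) := by
      intro j
      rw [hmix j t]
      exact deriv_snd (contDiff_P1 (hf j)) t 0
    rw [Finset.sum_congr rfl fun j _ => this j] at h
    exact h
  -- the main derivative computation
  have main : ∀ t ∈ Ioo (0:ℝ) T,
      HasDerivAt E (-(α - (N:ℝ)/2) * (u j0 t 0)^2) t := by
    intro t ht
    have htI : t ∈ Icc (0:ℝ) T := Ioo_subset_Icc_self ht
    have hedge : ∀ j : Fin N, HasDerivAt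
        (fun s => ∫ x in (0:ℝ)..(ℓ j), ((f j (s, x))^2 + (P2 (f j) (s, x))^2))
        (2 * ((f j (t, ℓ j) * P2 (P1 (f j)) (t, ℓ j) - (f j (t, ℓ j))^2 / 2)
          - (f j (t, 0) * P2 (P1 (f j)) (t, 0) - (f j (t, 0))^2 / 2))) t :=
      fun j => edge_deriv (hf j) (hℓ j) ht (hpdeP j)
    have hsum0 : HasDerivAt
        (fun s : ℝ => ∑ j, ∫ x in (0:ℝ)..(ℓ j), ((f j (s, x))^2 + (P2 (f j) (s, x))^2))
        (∑ j, 2 * ((f j (t, ℓ j) * P2 (P1 (f j)) (t, ℓ j) - (f j (t, ℓ j))^2 / 2)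
          - (f j (t, 0) * P2 (P1 (f j)) (t, 0) - (f j (t, 0))^2 / 2))) t :=
      HasDerivAt.fun_sum (fun j _ => hedge j)
    have hsum := hsum0.const_mul (1/2 : ℝ)
    rw [← hE'] at hsum
    refine hsum.congr_deriv (Eq.symm ?_)
    -- compute the value
    have hval : ∀ j : Fin N,
        2 * ((f j (t, ℓ j) * P2 (P1 (f j)) (t, ℓ j) - (f j (t, ℓ j))^2 / 2)
          - (f j (t, 0) * P2 (P1 (f j)) (t, 0) - (f j (t, 0))^2 / 2))
        = (u j0 t 0)^2 - 2 * (u j0 t 0) * P2 (P1 (f j)) (t, 0) := by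
      intro j
      have h1 : f j (t, ℓ j) = 0 := hdir j t htI
      have h2 : f j (t, 0) = u j0 t 0 := hcont j j0 t htI
      rw [h1, h2]; ring
    rw [Finset.sum_congr rfl fun j _ => hval j, Finset.sum_sub_distrib,
      Finset.sum_const, ← Finset.mul_sum, hfluxP t ht]
    have h2 : f j0 (t, 0) = u j0 t 0 := rfl
    rw [h2]
    simp only [Finset.card_univ, Fintype.card_fin, nsmul_eq_mul]
    ring
  refine ⟨fun t ht => ⟨main t ht, ?_⟩, ?_⟩
  · have h0 : 0 ≤ (α - (N:ℝ)/2) * (u j0 t 0)^2 :=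
      mul_nonneg (by linarith) (sq_nonneg _)
    rw [neg_mul]
    exact neg_nonpos.mpr h0
  · -- antitone
    have hEcont : Continuous E := by
      rw [hE']
      refine continuous_const.mul (continuous_finset_sum _ fun j _ => ?_)
      refine continuous_parametric_intervalIntegral_of_continuous'
        (f := fun s x => (f j (s, x))^2 + (P2 (f j) (s, x))^2) ?_ 0 (ℓ j)
      have h0 : Continuous (f j) := (hf j).continuous
      have h2 : Continuous (P2 (f j)) := (contDiff_P2 (hf j)).continuous
      unfold Function.uncurry
      fun_prop
    refine antitoneOn_of_deriv_nonpos (convex_Icc 0 T) hEcont.continuousOn ?_ ?_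
    · intro x hx
      rw [interior_Icc] at hx
      exact (main x hx).differentiableAt.differentiableWithinAt
    · intro x hx
      rw [interior_Icc] at hx
      rw [(main x hx).deriv]
      have h0 : 0 ≤ (α - (N:ℝ)/2) * (u j0 x 0)^2 :=
        mul_nonneg (by linarith) (sq_nonneg _)
      rw [neg_mul]
      exact neg_nonpos.mpr h0
end

section
/- Let N ≥ 1, α > N/2, ℓ_1, …, ℓ_N > 0, and let u_j : [0, T] × [0, ℓ_j] → ℝ be smooth functions satisfying the nonlinear BBM system ∂_t u_j − ∂_x²∂_t u_j + ∂_x u_j + u_j ∂_x u_j = 0 on (0, T) × (0, ℓ_j), with u_j(t, 0) = u_k(t, 0) for all j, k, ∑_{j=1}^N ∂_x ∂_t u_j(t, 0) = α u_1(t, 0) + (N/3) u_1(t, 0)², and u_j(t, ℓ_j) = 0. Then E(t) = (1/2) ∑_{j=1}^N ∫_0^{ℓ_j} (|u_j|² + |∂_x u_j|²) dx satisfies E'(t) = −(α − N/2) |u_1(t, 0)|² ≤ 0. -/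
open Function
open scoped ContDiff

noncomputable def pd1 (f : ℝ → ℝ → ℝ) : ℝ → ℝ → ℝ := fun t x => deriv (fun t' => f t' x) t
noncomputable def pd2 (f : ℝ → ℝ → ℝ) : ℝ → ℝ → ℝ := fun t x => deriv (fun x' => f t x') x

section
variable {f : ℝ → ℝ → ℝ} (hf : ContDiff ℝ ∞ (uncurry f))
include hf

lemma hasDerivAt_fst (t x : ℝ) :
    HasDerivAt (fun t' => f t' x) (fderiv ℝ (uncurry f) (t, x) (1, 0)) t := by
  have h1 : HasFDerivAt (uncurry f) (fderiv ℝ (uncurry f) (t, x)) (t, x) :=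
    (hf.differentiable (by norm_num) (t, x)).hasFDerivAt
  have h2 : HasDerivAt (fun t' : ℝ => ((t', x) : ℝ × ℝ)) (1, 0) t :=
    (hasDerivAt_id t).prodMk (hasDerivAt_const t x)
  exact h1.comp_hasDerivAt t h2

lemma hasDerivAt_snd (t x : ℝ) :
    HasDerivAt (fun x' => f t x') (fderiv ℝ (uncurry f) (t, x) (0, 1)) x := by
  have h1 : HasFDerivAt (uncurry f) (fderiv ℝ (uncurry f) (t, x)) (t, x) :=
    (hf.differentiable (by norm_num) (t, x)).hasFDerivAt
  have h2 : HasDerivAt (fun x' : ℝ => ((t, x') : ℝ × ℝ)) (0, 1) x :=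
    (hasDerivAt_const x t).prodMk (hasDerivAt_id x)
  exact h1.comp_hasDerivAt x h2

lemma hasDerivAt_pd1 (t x : ℝ) : HasDerivAt (fun t' => f t' x) (pd1 f t x) t := by
  have h := hasDerivAt_fst hf t x
  rw [pd1]; exact h.differentiableAt.hasDerivAt

lemma hasDerivAt_pd2 (t x : ℝ) : HasDerivAt (fun x' => f t x') (pd2 f t x) x := by
  have h := hasDerivAt_snd hf t x
  rw [pd2]; exact h.differentiableAt.hasDerivAt

lemma contDiff_pd1 : ContDiff ℝ ∞ (uncurry (pd1 f)) := by
  have h : uncurry (pd1 f) = fun p : ℝ × ℝ => fderiv ℝ (uncurry f) p (1, 0) := by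
    funext p
    exact (hasDerivAt_fst hf p.1 p.2).deriv
  rw [h]
  exact (ContinuousLinearMap.apply ℝ ℝ (((1:ℝ), (0:ℝ)) : ℝ × ℝ)).contDiff.comp
    (contDiff_infty_iff_fderiv.mp hf).2

lemma contDiff_pd2 : ContDiff ℝ ∞ (uncurry (pd2 f)) := by
  have h : uncurry (pd2 f) = fun p : ℝ × ℝ => fderiv ℝ (uncurry f) p (0, 1) := by
    funext p
    exact (hasDerivAt_snd hf p.1 p.2).deriv
  rw [h]
  exact (ContinuousLinearMap.apply ℝ ℝ (((0:ℝ), (1:ℝ)) : ℝ × ℝ)).contDiff.comp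
    (contDiff_infty_iff_fderiv.mp hf).2

lemma pd_symm : pd1 (pd2 f) = pd2 (pd1 f) := by
  funext t x
  have hdf : ∀ y : ℝ × ℝ, HasFDerivAt (uncurry f) (fderiv ℝ (uncurry f) y) y := fun y =>
    (hf.differentiable (by norm_num) y).hasFDerivAt
  have h2 : HasFDerivAt (fderiv ℝ (uncurry f))
      (fderiv ℝ (fderiv ℝ (uncurry f)) (t, x)) (t, x) :=
    (((contDiff_infty_iff_fderiv.mp hf).2.differentiable (by norm_num)) (t, x)).hasFDerivAt
  have hsymm := second_derivative_symmetric hdf h2 ((1:ℝ), (0:ℝ)) ((0:ℝ), (1:ℝ))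
  have e1 : pd1 (pd2 f) t x = fderiv ℝ (fderiv ℝ (uncurry f)) (t, x) (1, 0) (0, 1) := by
    have h := hasDerivAt_fst (contDiff_pd2 hf) t x
    have e : uncurry (pd2 f) = fun p : ℝ × ℝ => fderiv ℝ (uncurry f) p (0, 1) := by
      funext p; exact (hasDerivAt_snd hf p.1 p.2).deriv
    rw [e] at h
    have h2' : HasFDerivAt (fun p : ℝ × ℝ => fderiv ℝ (uncurry f) p (0, 1))
        ((ContinuousLinearMap.apply ℝ ℝ (((0:ℝ),(1:ℝ)) : ℝ × ℝ)).comp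
          (fderiv ℝ (fderiv ℝ (uncurry f)) (t, x))) (t, x) :=
      (ContinuousLinearMap.apply ℝ ℝ (((0:ℝ),(1:ℝ)) : ℝ × ℝ)).hasFDerivAt.comp (t, x) h2
    have h3 : HasDerivAt (fun t' => fderiv ℝ (uncurry f) (t', x) (0, 1))
        (fderiv ℝ (fderiv ℝ (uncurry f)) (t, x) (1, 0) (0, 1)) t := by
      have hin : HasDerivAt (fun t' : ℝ => ((t', x) : ℝ × ℝ)) (1, 0) t :=
        (hasDerivAt_id t).prodMk (hasDerivAt_const t x)
      exact h2'.comp_hasDerivAt t hin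
    show deriv (fun t' => pd2 f t' x) t = _
    have e2 : (fun t' => pd2 f t' x) = fun t' => fderiv ℝ (uncurry f) (t', x) (0, 1) := by
      funext t'; exact (hasDerivAt_snd hf t' x).deriv
    rw [e2]; exact h3.deriv
  have e2 : pd2 (pd1 f) t x = fderiv ℝ (fderiv ℝ (uncurry f)) (t, x) (0, 1) (1, 0) := by
    have h2' : HasFDerivAt (fun p : ℝ × ℝ => fderiv ℝ (uncurry f) p (1, 0))
        ((ContinuousLinearMap.apply ℝ ℝ (((1:ℝ),(0:ℝ)) : ℝ × ℝ)).comp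
          (fderiv ℝ (fderiv ℝ (uncurry f)) (t, x))) (t, x) :=
      (ContinuousLinearMap.apply ℝ ℝ (((1:ℝ),(0:ℝ)) : ℝ × ℝ)).hasFDerivAt.comp (t, x) h2
    have h3 : HasDerivAt (fun x' => fderiv ℝ (uncurry f) (t, x') (1, 0))
        (fderiv ℝ (fderiv ℝ (uncurry f)) (t, x) (0, 1) (1, 0)) x := by
      have hin : HasDerivAt (fun x' : ℝ => ((t, x') : ℝ × ℝ)) (0, 1) x :=
        (hasDerivAt_const x t).prodMk (hasDerivAt_id x)
      exact h2'.comp_hasDerivAt x hin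
    show deriv (fun x' => pd1 f t x') x = _
    have e3 : (fun x' => pd1 f t x') = fun x' => fderiv ℝ (uncurry f) (t, x') (1, 0) := by
      funext x'; exact (hasDerivAt_fst hf t x').deriv
    rw [e3]; exact h3.deriv
  rw [e1, e2]
  exact hsymm

end

section main

variable {g : ℝ → ℝ → ℝ}

lemma sect2_cont (hg : ContDiff ℝ ∞ (uncurry g)) (t : ℝ) : Continuous (fun x => g t x) :=
  hg.continuous.comp (continuous_const.prodMk continuous_id)

lemma key_deriv (hg : ContDiff ℝ ∞ (uncurry g)) (L t : ℝ) :
    HasDerivAt (fun s => ∫ x in (0:ℝ)..L, ((g s x)^2 + (pd2 g s x)^2))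
      (∫ x in (0:ℝ)..L, (2 * g t x * pd1 g t x + 2 * pd2 g t x * pd1 (pd2 g) t x)) t := by
  set F : ℝ → ℝ → ℝ := fun s x => (g s x)^2 + (pd2 g s x)^2 with hF
  set F' : ℝ → ℝ → ℝ := fun s x =>
    2 * g s x * pd1 g s x + 2 * pd2 g s x * pd1 (pd2 g) s x with hF'
  have hg2 := contDiff_pd2 hg
  have hF'c : Continuous (uncurry F') := by
    have h1 : Continuous (uncurry g) := hg.continuous
    have h2 : Continuous (uncurry (pd1 g)) := (contDiff_pd1 hg).continuous
    have h3 : Continuous (uncurry (pd2 g)) := hg2.continuous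
    have h4 : Continuous (uncurry (pd1 (pd2 g))) := (contDiff_pd1 hg2).continuous
    exact ((continuous_const.mul h1).mul h2).add ((continuous_const.mul h3).mul h4)
  have hFsc : ∀ s, Continuous (fun x => F s x) := by
    intro s
    exact ((sect2_cont hg s).pow 2).add ((sect2_cont hg2 s).pow 2)
  -- bound on compact set
  obtain ⟨C, hC⟩ : ∃ C, ∀ p ∈ (Set.Icc (t-1) (t+1) ×ˢ Set.uIcc (0:ℝ) L),
      ‖uncurry F' p‖ ≤ C :=
    (isCompact_Icc.prod isCompact_uIcc).exists_bound_of_continuousOn hF'c.continuousOn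
  have key := intervalIntegral.hasDerivAt_integral_of_dominated_loc_of_deriv_le
    (F := F) (F' := F') (x₀ := t) (a := 0) (b := L) (μ := MeasureTheory.volume)
    (bound := fun _ => C) (s := Metric.ball t 1) (Metric.ball_mem_nhds t one_pos)
    (Filter.Eventually.of_forall fun s => ((hFsc s).aestronglyMeasurable))
    ((hFsc t).intervalIntegrable 0 L)
    ((hF'c.comp (continuous_const.prodMk continuous_id)).aestronglyMeasurable)
    (Filter.Eventually.of_forall ?_)
    (intervalIntegrable_const)
    (Filter.Eventually.of_forall ?_)
  · exact key.2
  · intro x hx s hs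
    have hs' : s ∈ Set.Icc (t-1) (t+1) := by
      have := abs_lt.mp (mem_ball_iff_norm.mp hs)
      constructor <;> linarith [this.1, this.2]
    exact hC (s, x) ⟨hs', Set.uIoc_subset_uIcc hx⟩
  · intro x _ s _
    have h1 : HasDerivAt (fun s' => g s' x) (pd1 g s x) s := hasDerivAt_pd1 hg s x
    have h2 : HasDerivAt (fun s' => pd2 g s' x) (pd1 (pd2 g) s x) s :=
      hasDerivAt_pd1 hg2 s x
    have := (h1.pow 2).add (h2.pow 2)
    refine this.congr_deriv ?_
    push_cast
    ring

end main

section ftc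
variable {g : ℝ → ℝ → ℝ}

lemma key_ftc (hg : ContDiff ℝ ∞ (uncurry g)) {L t : ℝ} (hL : 0 < L)
    (hpde : ∀ x ∈ Set.Ioo (0:ℝ) L,
      pd1 g t x - pd2 (pd2 (pd1 g)) t x + pd2 g t x + g t x * pd2 g t x = 0) :
    (∫ x in (0:ℝ)..L, (2 * g t x * pd1 g t x + 2 * pd2 g t x * pd1 (pd2 g) t x))
      = (2 * g t L * pd2 (pd1 g) t L - (g t L)^2 - (2/3)*(g t L)^3)
        - (2 * g t 0 * pd2 (pd1 g) t 0 - (g t 0)^2 - (2/3)*(g t 0)^3) := by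
  have hg1 := contDiff_pd1 hg
  have hg21 := contDiff_pd2 hg1
  set Φ : ℝ → ℝ := fun x => 2 * g t x * pd2 (pd1 g) t x - (g t x)^2 - (2/3)*(g t x)^3 with hΦ
  have c1 := sect2_cont hg t
  have c2 := sect2_cont hg21 t
  have hcontΦ : ContinuousOn Φ (Set.Icc 0 L) := by
    apply Continuous.continuousOn
    exact (((continuous_const.mul c1).mul c2).sub (c1.pow 2)).sub
      (continuous_const.mul (c1.pow 3))
  have hderiv : ∀ x ∈ Set.Ioo (0:ℝ) L, HasDerivAt Φ
      (2 * g t x * pd1 g t x + 2 * pd2 g t x * pd1 (pd2 g) t x) x := by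
    intro x hx
    have hgx : HasDerivAt (fun x' => g t x') (pd2 g t x) x := hasDerivAt_pd2 hg t x
    have hwx : HasDerivAt (fun x' => pd2 (pd1 g) t x') (pd2 (pd2 (pd1 g)) t x) x :=
      hasDerivAt_pd2 hg21 t x
    have h := (((hgx.const_mul (2:ℝ)).mul hwx).sub (hgx.pow 2)).sub
      ((hgx.pow 3).const_mul (2/3))
    refine h.congr_deriv ?_
    have hB : pd2 (pd2 (pd1 g)) t x = pd1 g t x + pd2 g t x + g t x * pd2 g t x := by
      have := hpde x hx; linarith
    rw [pd_symm hg, hB]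
    push_cast
    ring
  have hint : IntervalIntegrable
      (fun x => 2 * g t x * pd1 g t x + 2 * pd2 g t x * pd1 (pd2 g) t x)
      MeasureTheory.volume 0 L := by
    apply Continuous.intervalIntegrable
    have c3 := sect2_cont (contDiff_pd1 hg) t
    have c4 := sect2_cont hg1 t
    have c5 := sect2_cont (contDiff_pd2 hg) t
    have c6 := sect2_cont (contDiff_pd1 (contDiff_pd2 hg)) t
    exact ((continuous_const.mul c1).mul c4).add ((continuous_const.mul c5).mul c6)
  exact intervalIntegral.integral_eq_sub_of_hasDerivAt_of_le hL.le hcontΦ hderiv hint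

end ftc

theorem stmt_10 (N : ℕ) (hN : 0 < N) (α T : ℝ) (hα : (N:ℝ)/2 < α) (hT : 0 < T)
    (ℓ : Fin N → ℝ) (hℓ : ∀ j, 0 < ℓ j)
    (u : Fin N → ℝ → ℝ → ℝ)
    (hu : ∀ j, ContDiff ℝ (⊤ : ℕ∞) (Function.uncurry (u j)))
    (hpde : ∀ j, ∀ t ∈ Set.Ioo (0:ℝ) T, ∀ x ∈ Set.Ioo (0:ℝ) (ℓ j),
      deriv (fun t' => u j t' x) t
        - deriv (deriv (fun x' => deriv (fun t' => u j t' x') t)) x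
        + deriv (fun x' => u j t x') x
        + u j t x * deriv (fun x' => u j t x') x = 0)
    (hcont : ∀ j k, ∀ t ∈ Set.Icc (0:ℝ) T, u j t 0 = u k t 0)
    (hflux : ∀ t ∈ Set.Ioo (0:ℝ) T,
      ∑ j, deriv (fun x' => deriv (fun t' => u j t' x') t) 0 =
        α * u ⟨0, hN⟩ t 0 + (N:ℝ)/3 * (u ⟨0, hN⟩ t 0)^2)
    (hdir : ∀ j, ∀ t ∈ Set.Icc (0:ℝ) T, u j t (ℓ j) = 0)
    (E : ℝ → ℝ)
    (hE : ∀ t, E t = (1/2) * ∑ j, ∫ x in (0:ℝ)..(ℓ j),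
      ((u j t x)^2 + (deriv (fun x' => u j t x') x)^2)) :
    ∀ t ∈ Set.Ioo (0:ℝ) T,
      HasDerivAt E (-(α - (N:ℝ)/2) * (u ⟨0, hN⟩ t 0)^2) t ∧
      -(α - (N:ℝ)/2) * (u ⟨0, hN⟩ t 0)^2 ≤ 0 := by
  intro t ht
  have ht' : t ∈ Set.Icc (0:ℝ) T := ⟨ht.1.le, ht.2.le⟩
  set c : ℝ := u ⟨0, hN⟩ t 0 with hc
  constructor
  · have hu' : ∀ j, ContDiff ℝ ∞ (uncurry (u j)) := fun j => (hu j).of_le (by simp)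
    have hEeq : E = fun s => (1/2) * ∑ j, ∫ x in (0:ℝ)..(ℓ j),
        ((u j s x)^2 + (pd2 (u j) s x)^2) := by
      funext s; exact hE s
    have hj : ∀ j : Fin N, HasDerivAt
        (fun s => ∫ x in (0:ℝ)..(ℓ j), ((u j s x)^2 + (pd2 (u j) s x)^2))
        ((c^2 + 2/3*c^3) - 2 * c * pd2 (pd1 (u j)) t 0) t := by
      intro j
      have hd := key_deriv (hu' j) (ℓ j) t
      have hpde' : ∀ x ∈ Set.Ioo (0:ℝ) (ℓ j),
          pd1 (u j) t x - pd2 (pd2 (pd1 (u j))) t x + pd2 (u j) t x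
            + u j t x * pd2 (u j) t x = 0 := fun x hx => hpde j t ht x hx
      have hftc := key_ftc (hu' j) (hℓ j) hpde'
      rw [hftc] at hd
      have e0 : u j t (ℓ j) = 0 := hdir j t ht'
      have e1 : u j t 0 = c := hcont j ⟨0, hN⟩ t ht'
      rw [e0, e1] at hd
      convert hd using 1
      ring
    have hD := (HasDerivAt.sum (fun j (_ : j ∈ Finset.univ) => hj j)).const_mul (1/2 : ℝ)
    simp only [Finset.sum_apply] at hD
    rw [hEeq]
    refine hD.congr_deriv ?_
    have hflux' : ∑ j, pd2 (pd1 (u j)) t 0 = α * c + (N:ℝ)/3 * c^2 := hflux t ht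
    have hsum : ∑ j : Fin N, ((c^2 + 2/3*c^3) - 2 * c * pd2 (pd1 (u j)) t 0)
        = (N:ℝ) * (c^2 + 2/3*c^3) - 2*c*(α * c + (N:ℝ)/3 * c^2) := by
      rw [Finset.sum_sub_distrib, Finset.sum_const, Finset.card_univ, Fintype.card_fin,
        ← Finset.mul_sum, hflux', nsmul_eq_mul]
    rw [hsum]
    ring
  · nlinarith [sq_nonneg c, hα]
end
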